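/- arXiv:1208.4948 — 6 statements merged into one kernel-verified Lean document; each statement's English description precedes it below -/
import Mathlib

section
/- Let X and Y be manifolds, and let φ : C∞(Y) → C∞(X) be a map compatible with all C∞-operations, i.e. for every n ≥ 0, every smooth f : ℝⁿ → ℝ, and all c₁, …, cₙ ∈ C∞(Y), φ(y ↦ f(c₁(y), …, cₙ(y))) is the function x ↦ f(φ(c₁)(x), …, φ(cₙ)(x)). Then there exists a unique smooth map h : X → Y such that φ(c) = c ∘ h for all c ∈ C∞(Y). In particular, the assignment h ↦ h* := (c ↦ c ∘ h) is a bijection from the set of smooth maps X → Y to the set of C∞-operation-compatible maps C∞(Y) → C∞(X), so the functor sending a manifold X to the C∞-ring C∞(X) and a smooth map h to h* is full and faithful into the opposite category of C∞-rings. -/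
open scoped Manifold

local notation "∞" => (⊤ : ℕ∞)

section

open Set Topology Filter Function

variable {m n : ℕ} {X Y : Type*}
  [TopologicalSpace X] [ChartedSpace (EuclideanSpace ℝ (Fin m)) X]
  [IsManifold (𝓡 m) ∞ X] [T2Space X] [SecondCountableTopology X]
  [TopologicalSpace Y] [ChartedSpace (EuclideanSpace ℝ (Fin n)) Y]
  [IsManifold (𝓡 n) ∞ Y] [T2Space Y] [SecondCountableTopology Y]

omit [IsManifold (𝓡 m) ∞ X] [T2Space X] [SecondCountableTopology X] in
lemma my_exists_smooth_sublevel_compact :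
    ∃ f : C^∞⟮𝓡 n, Y; ℝ⟯, ∀ r : ℝ, IsCompact {y : Y | f y ≤ r} := by
  haveI : LocallyCompactSpace Y := ChartedSpace.locallyCompactSpace (EuclideanSpace ℝ (Fin n)) Y
  obtain ⟨K⟩ : Nonempty (CompactExhaustion Y) := ⟨CompactExhaustion.choice Y⟩
  set U : ℕ → Set Y := fun i => interior (K (i + 1)) with hU
  have hUopen : ∀ i, IsOpen (U i) := fun i => isOpen_interior
  have hUcover : univ ⊆ ⋃ i, U i := by
    intro y _
    have hy : y ∈ ⋃ i, K i := by rw [K.iUnion_eq]; trivial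
    rcases mem_iUnion.1 hy with ⟨i, hi⟩
    exact mem_iUnion.2 ⟨i, K.subset_interior_succ i hi⟩
  obtain ⟨ρ, hρ⟩ := SmoothPartitionOfUnity.exists_isSubordinate (𝓡 n) isClosed_univ U hUopen hUcover
  set f : Y → ℝ := fun y => ∑ᶠ i, ρ i y • (i : ℝ) with hf
  have hsmooth : ContMDiff (𝓡 n) 𝓘(ℝ, ℝ) ∞ f :=
    ρ.contMDiff_finsum_smul (n := ∞) fun i x _ => contMDiffAt_const
  have hfc : Continuous f := hsmooth.continuous
  have key : ∀ y : Y, ∃ i : ℕ, ρ i y ≠ 0 ∧ (i : ℝ) ≤ f y := by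
    intro y
    have hfin : (Function.support fun i => ρ i y).Finite := ρ.locallyFinite.point_finite y
    have hone : ∑ᶠ i, ρ i y = 1 := ρ.sum_eq_one (mem_univ y)
    have hne' : {i : ℕ | ρ i y ≠ 0}.Nonempty := by
      by_contra h
      rw [Set.not_nonempty_iff_eq_empty, Set.eq_empty_iff_forall_notMem] at h
      simp only [mem_setOf_eq, not_not] at h
      rw [finsum_congr h, finsum_zero] at hone
      exact one_ne_zero hone.symm
    set M := sInf {i : ℕ | ρ i y ≠ 0} with hM
    have hmmem : ρ M y ≠ 0 := Nat.sInf_mem hne'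
    refine ⟨M, hmmem, ?_⟩
    have h1 : ∑ᶠ i, ρ i y = ∑ i ∈ hfin.toFinset, ρ i y := finsum_eq_sum _ hfin
    have hsub : (Function.support fun i => ρ i y • (i : ℝ)) ⊆ ↑hfin.toFinset := by
      intro i hi
      simp only [Set.Finite.coe_toFinset]
      exact fun h0 => hi (by simp [Function.mem_support] at h0 ⊢; simp [h0])
    have h2 : f y = ∑ i ∈ hfin.toFinset, ρ i y • (i : ℝ) :=
      finsum_eq_sum_of_support_subset _ hsub
    have h3 : (M : ℝ) = ∑ i ∈ hfin.toFinset, ρ i y * (M : ℝ) := by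
      rw [← Finset.sum_mul, ← h1, hone, one_mul]
    rw [h2, h3]
    refine Finset.sum_le_sum fun i hi => ?_
    have hiy : ρ i y ≠ 0 := by simpa using (hfin.mem_toFinset.1 hi)
    have hMi : M ≤ i := Nat.sInf_le hiy
    simp only [smul_eq_mul]
    exact mul_le_mul_of_nonneg_left (by exact_mod_cast hMi) (ρ.nonneg i y)
  have main : ∀ r : ℝ, IsCompact {y : Y | f y ≤ r} := by
    intro r
    have hC : IsCompact (⋃ i ∈ Finset.range (⌈r⌉₊ + 1), (K (i+1) : Set Y)) :=
      (Finset.range (⌈r⌉₊ + 1)).isCompact_biUnion fun i _ => K.isCompact (i + 1)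
    refine hC.of_isClosed_subset (isClosed_le hfc continuous_const) ?_
    intro y (hy : f y ≤ r)
    obtain ⟨i, hρi, hif⟩ := key y
    have him : y ∈ U i := hρ i (subset_closure (by exact hρi))
    have hcast : (i : ℝ) ≤ (⌈r⌉₊ : ℝ) := le_trans (le_trans hif hy) (Nat.le_ceil r)
    have hi' : i ≤ ⌈r⌉₊ := by exact_mod_cast hcast
    exact mem_biUnion (Finset.mem_range.2 (Nat.lt_succ_of_le hi')) (interior_subset him)
  exact ⟨⟨f, hsmooth⟩, main⟩

omit [IsManifold (𝓡 m) ∞ X] [T2Space X] [SecondCountableTopology X] in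
lemma my_psi_key (ψ : C^∞⟮𝓡 n, Y; ℝ⟯ → ℝ)
    (hψ : ∀ (k : ℕ) (f : (Fin k → ℝ) → ℝ), ContDiff ℝ (⊤ : ℕ∞) f →
      ∀ (c : Fin k → C^∞⟮𝓡 n, Y; ℝ⟯) (d : C^∞⟮𝓡 n, Y; ℝ⟯),
        (∀ y, d y = f fun i => c i y) → ψ d = f fun i => ψ (c i)) :
    ∃! y₀ : Y, ∀ c : C^∞⟮𝓡 n, Y; ℝ⟯, ψ c = c y₀ := by
  haveI : LocallyCompactSpace Y := ChartedSpace.locallyCompactSpace (EuclideanSpace ℝ (Fin n)) Y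
  haveI : SigmaCompactSpace Y := inferInstance
  set one : C^∞⟮𝓡 n, Y; ℝ⟯ := ⟨fun _ => 1, contMDiff_const⟩ with hone_def
  have hone : ψ one = 1 := by
    have := hψ 0 (fun _ => 1) contDiff_const (fun i => one) one (fun y => rfl)
    simpa using this
  have hex : ∃ y₀ : Y, ∀ c : C^∞⟮𝓡 n, Y; ℝ⟯, ψ c = c y₀ := by
    by_contra hno
    push_neg at hno
    choose c hc using hno
    obtain ⟨f₀, hf₀⟩ := my_exists_smooth_sublevel_compact (n := n) (Y := Y)
    set r := ψ f₀ with hr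
    have hK : IsCompact {y : Y | f₀ y = r} :=
      (hf₀ r).of_isClosed_subset (isClosed_eq f₀.contMDiff.continuous continuous_const)
        (fun y hy => le_of_eq hy)
    set U : Y → Set Y := fun z => {w : Y | c z w ≠ ψ (c z)} with hUdef
    have hUopen : ∀ z, IsOpen (U z) := fun z =>
      isOpen_ne_fun (c z).contMDiff.continuous continuous_const
    have hKcov : {y : Y | f₀ y = r} ⊆ ⋃ z, U z := fun y _ =>
      mem_iUnion.2 ⟨y, Ne.symm (hc y)⟩
    obtain ⟨t, ht⟩ := hK.elim_finite_subcover U hUopen hKcov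
    set k := t.card with hk
    set σ : Fin k → Y := fun i => (t.equivFin.symm i : Y) with hσ
    set F : (Fin (k + 1) → ℝ) → ℝ := fun v =>
      (v 0 - r) ^ 2 + ∑ i : Fin k, (v i.succ - ψ (c (σ i))) ^ 2 with hF
    have hFdiff : ContDiff ℝ (⊤ : ℕ∞) F := by
      apply ContDiff.add
      · exact ((ContinuousLinearMap.proj (0 : Fin (k+1)) :
          ((Fin (k+1)) → ℝ) →L[ℝ] ℝ).contDiff.sub contDiff_const).pow 2
      · exact ContDiff.sum fun i _ =>
          ((ContinuousLinearMap.proj (i.succ : Fin (k+1)) :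
            ((Fin (k+1)) → ℝ) →L[ℝ] ℝ).contDiff.sub contDiff_const).pow 2
    set cv : Fin (k + 1) → C^∞⟮𝓡 n, Y; ℝ⟯ := Fin.cons f₀ (fun i => c (σ i)) with hcv
    have hqsmooth : ContMDiff (𝓡 n) 𝓘(ℝ, ℝ) ∞ (fun y => F fun i => cv i y) :=
      (hFdiff.of_le (by simp)).comp_contMDiff
        (contMDiff_pi_space.2 fun i => (cv i).contMDiff)
    set q : C^∞⟮𝓡 n, Y; ℝ⟯ := ⟨fun y => F fun i => cv i y, hqsmooth⟩ with hq
    have hψq : ψ q = 0 := by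
      have := hψ (k + 1) F hFdiff cv q (fun y => rfl)
      rw [this, hF]
      simp only [Fin.cons_zero, Fin.cons_succ, hcv, ← hr]
      simp
    have hqpos : ∀ y, 0 < q y := by
      intro y
      have hterm : ∀ i : Fin k, 0 ≤ (cv i.succ y - ψ (c (σ i))) ^ 2 := fun i => sq_nonneg _
      have hsum : 0 ≤ ∑ i : Fin k, (cv i.succ y - ψ (c (σ i))) ^ 2 :=
        Finset.sum_nonneg fun i _ => hterm i
      have hfirst : 0 ≤ (cv 0 y - r) ^ 2 := sq_nonneg _
      have hqy : q y = (cv 0 y - r) ^ 2 + ∑ i : Fin k, (cv i.succ y - ψ (c (σ i))) ^ 2 := rfl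
      by_cases hy : f₀ y = r
      · obtain ⟨z, hzt, hzy⟩ := Set.mem_iUnion₂.1 (ht hy)
        set i := t.equivFin ⟨z, hzt⟩ with hi
        have hσi : σ i = z := by simp [hσ, hi]
        have hcvi : cv i.succ y = c z y := by
          simp only [hcv, Fin.cons_succ, hσi]
        have hpos : 0 < (cv i.succ y - ψ (c (σ i))) ^ 2 := by
          rw [hσi, hcvi]
          exact pow_pos (abs_pos.2 (sub_ne_zero.2 hzy)) 2 |>.trans_le (by rw [sq_abs])
        have hspos : 0 < ∑ j : Fin k, (cv j.succ y - ψ (c (σ j))) ^ 2 :=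
          Finset.sum_pos' (fun j _ => hterm j) ⟨i, Finset.mem_univ i, hpos⟩
        rw [hqy]; linarith
      · have hcv0 : cv 0 y = f₀ y := by simp [hcv]
        have hpos : 0 < (cv 0 y - r) ^ 2 := by
          rw [hcv0]
          exact pow_pos (abs_pos.2 (sub_ne_zero.2 hy)) 2 |>.trans_le (by rw [sq_abs])
        rw [hqy]; linarith
    have hqne : ∀ y, q y ≠ 0 := fun y => (hqpos y).ne'
    set p : C^∞⟮𝓡 n, Y; ℝ⟯ := ⟨fun y => (q y)⁻¹, q.contMDiff.inv₀ hqne⟩ with hp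
    have hmul := hψ 2 (fun v => v 0 * v 1)
      ((contDiff_apply ℝ ℝ (0 : Fin 2)).mul (contDiff_apply ℝ ℝ (1 : Fin 2)))
      ![q, p] one (fun y => by
        simp [one, Matrix.cons_val_zero, Matrix.cons_val_one, hp,
          (mul_inv_cancel₀ (hqne y)).symm])
    rw [hone] at hmul
    have hcontr : (1 : ℝ) = ψ q * ψ p := by simpa using hmul
    rw [hψq, zero_mul] at hcontr
    exact one_ne_zero hcontr
  obtain ⟨y₀, hy₀⟩ := hex
  refine ⟨y₀, hy₀, fun y₁ hy₁ => ?_⟩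
  by_contra hne
  obtain ⟨g, hg0, hg1, -⟩ := exists_contMDiffMap_zero_one_of_isClosed (𝓡 n)
    (isClosed_singleton (x := y₁)) (isClosed_singleton (x := y₀))
    (by simpa [Set.disjoint_singleton] using hne)
  have h1 : g y₁ = 0 := hg0 rfl
  have h2 : g y₀ = 1 := hg1 rfl
  have h3 := (hy₀ g).symm.trans (hy₁ g)
  rw [h1, h2] at h3
  exact one_ne_zero h3

/-- A map `φ : C^∞(Y) → C^∞(X)` is compatible with all `C^∞`-operations: for every `k ≥ 0`,
every smooth `f : ℝᵏ → ℝ` and all `c₁, …, c_k ∈ C^∞(Y)`, if `d ∈ C^∞(Y)` is the function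
`y ↦ f (c₁ y, …, c_k y)` then `φ d` is the function `x ↦ f (φ c₁ x, …, φ c_k x)`. -/
def CInfOpCompat (φ : C^∞⟮𝓡 n, Y; ℝ⟯ → C^∞⟮𝓡 m, X; ℝ⟯) : Prop :=
  ∀ (k : ℕ) (f : (Fin k → ℝ) → ℝ), ContDiff ℝ (⊤ : ℕ∞) f →
    ∀ (c : Fin k → C^∞⟮𝓡 n, Y; ℝ⟯) (d : C^∞⟮𝓡 n, Y; ℝ⟯),
      (∀ y : Y, d y = f fun i => c i y) →
      ∀ x : X, φ d x = f fun i => φ (c i) x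

/-- Let `X, Y` be manifolds (smooth, Hausdorff and second countable, without boundary).
For every smooth map `h : X → Y` the pullback `c ↦ c ∘ h` is a map `C^∞(Y) → C^∞(X)`
compatible with all `C^∞`-operations; and conversely every map `φ : C^∞(Y) → C^∞(X)`
compatible with all `C^∞`-operations is of the form `φ c = c ∘ h` for a unique smooth map
`h : X → Y`.  Hence `h ↦ h^*` is a bijection from smooth maps `X → Y` to
`C^∞`-operation-compatible maps `C^∞(Y) → C^∞(X)`, so the functor `X ↦ C^∞(X)`, `h ↦ h^*`
into the opposite category of `C^∞`-rings is full and faithful. -/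
theorem cInfOpCompat_bijective_pullback :
    (∀ h : C^∞⟮𝓡 m, X; 𝓡 n, Y⟯, CInfOpCompat fun c : C^∞⟮𝓡 n, Y; ℝ⟯ => c.comp h) ∧
    (∀ φ : C^∞⟮𝓡 n, Y; ℝ⟯ → C^∞⟮𝓡 m, X; ℝ⟯, CInfOpCompat φ →
      ∃! h : C^∞⟮𝓡 m, X; 𝓡 n, Y⟯, ∀ (c : C^∞⟮𝓡 n, Y; ℝ⟯) (x : X), φ c x = c (h x)) := by
  constructor
  · intro h k f hf c d hd x
    simpa using hd (h x)
  · intro φ hφ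
    have hpoint : ∀ x : X, ∃! y₀ : Y, ∀ c : C^∞⟮𝓡 n, Y; ℝ⟯, φ c x = c y₀ := fun x =>
      my_psi_key (fun c => φ c x)
        (fun k f hf c d hd => hφ k f hf c d hd x)
    have hpoint' : ∀ x : X, ∃ y₀ : Y, (∀ c : C^∞⟮𝓡 n, Y; ℝ⟯, φ c x = c y₀) ∧
        (∀ y₁ : Y, (∀ c : C^∞⟮𝓡 n, Y; ℝ⟯, φ c x = c y₁) → y₁ = y₀) := fun x => (hpoint x)
    choose H hH hHu using hpoint'
    -- continuity of H
    have hcont : Continuous H := by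
      rw [continuous_iff_continuousAt]
      intro x₀
      rw [ContinuousAt, Filter.tendsto_def]
      intro V hV
      obtain ⟨b, -, hbV⟩ := ((SmoothBumpFunction.nhds_basis_support
        (I := 𝓡 n) (c := H x₀) hV).mem_iff).1 hV
      set bb : C^∞⟮𝓡 n, Y; ℝ⟯ := ⟨fun y => b y, b.contMDiff⟩ with hbb
      have hb1 : φ bb x₀ = 1 := by
        rw [hH x₀ bb]
        exact b.eq_one
      have hWopen : IsOpen {x : X | φ bb x ≠ 0} :=
        isOpen_ne_fun (φ bb).contMDiff.continuous continuous_const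
      refine Filter.mem_of_superset (hWopen.mem_nhds (by simp [hb1])) ?_
      intro x hx
      have : bb (H x) ≠ 0 := by rw [← hH x bb]; exact hx
      exact hbV this
    -- smoothness of H
    have hsmooth : ContMDiff (𝓡 m) (𝓡 n) ∞ H := by
      intro x₀
      set y₀ := H x₀ with hy₀
      obtain ⟨b, -, -⟩ := ((SmoothBumpFunction.nhds_basis_tsupport
        (I := 𝓡 n) y₀).mem_iff).1 (Filter.univ_mem)
      set e := extChartAt (𝓡 n) y₀ with he
      have hw : ContMDiff (𝓡 n) 𝓘(ℝ, EuclideanSpace ℝ (Fin n)) ∞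
          (fun y => b y • e y) := b.contMDiff_smul contMDiffOn_extChartAt
      set cc : Fin n → C^∞⟮𝓡 n, Y; ℝ⟯ := fun i =>
        ⟨fun y => (b y • e y : EuclideanSpace ℝ (Fin n)) i,
          ((EuclideanSpace.proj (𝕜 := ℝ) (i : Fin n)).contMDiff.comp hw : _)⟩ with hcc
      set G : X → EuclideanSpace ℝ (Fin n) := fun x =>
        ((EuclideanSpace.equiv (Fin n) ℝ).symm : (Fin n → ℝ) →L[ℝ] EuclideanSpace ℝ (Fin n))
          (fun i => φ (cc i) x) with hG
      have hGsmooth : ContMDiff (𝓡 m) 𝓘(ℝ, EuclideanSpace ℝ (Fin n)) ∞ G :=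
        ((EuclideanSpace.equiv (Fin n) ℝ).symm :
          (Fin n → ℝ) →L[ℝ] EuclideanSpace ℝ (Fin n)).contMDiff.comp
          (contMDiff_pi_space.2 fun i => (φ (cc i)).contMDiff)
      have hbV : {y : Y | b y = 1} ∩ (chartAt (EuclideanSpace ℝ (Fin n)) y₀).source ∈ 𝓝 y₀ :=
        Filter.inter_mem b.eventuallyEq_one
          ((chartAt (EuclideanSpace ℝ (Fin n)) y₀).open_source.mem_nhds
            (mem_chart_source _ y₀))
      have hpre : ∀ᶠ x in 𝓝 x₀,
          H x ∈ {y : Y | b y = 1} ∩ (chartAt (EuclideanSpace ℝ (Fin n)) y₀).source :=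
        hcont.continuousAt.preimage_mem_nhds hbV
      have hGeq : ∀ᶠ x in 𝓝 x₀, G x = e (H x) := by
        filter_upwards [hpre] with x hx
        have hb1 : b (H x) = 1 := hx.1
        ext i
        have h1 : G x i = φ (cc i) x := rfl
        rw [h1, hH x (cc i)]
        show (b (H x) • e (H x) : EuclideanSpace ℝ (Fin n)) i = e (H x) i
        rw [hb1, one_smul]
      have hGx₀ : G x₀ = e y₀ := by
        have := hGeq.self_of_nhds
        rw [this]
      have htarget : e.target ∈ 𝓝 (G x₀) := by
        rw [hGx₀]
        exact extChartAt_target_mem_nhds (I := 𝓡 n) y₀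
      have hcomp : ContMDiffAt (𝓡 m) (𝓡 n) ∞ (e.symm ∘ G) x₀ :=
        (((contMDiffOn_extChartAt_symm (I := 𝓡 n) y₀).contMDiffAt htarget)).comp x₀
          (hGsmooth x₀)
      refine hcomp.congr_of_eventuallyEq ?_
      filter_upwards [hGeq, hpre] with x hGx hx
      have hsrc : H x ∈ e.source := by
        rw [he, extChartAt_source]
        exact hx.2
      show H x = e.symm (G x)
      rw [hGx, e.left_inv hsrc]
    refine ⟨⟨H, hsmooth⟩, fun c x => ?_, fun h' hh' => ?_⟩
    · exact hH x c
    · apply ContMDiffMap.ext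
      intro x
      exact hHu x (h' x) (fun c => hh' c x)
end
end

section
/- Let R be a commutative ring, let (E•, φ) and (F•, ψ) be two-term complexes of R-modules, and let f• = (f¹, f²) : (E•, φ) → (F•, ψ) be a 1-morphism. Then f• is an equivalence if and only if the sequence 0 → E¹ →u F¹ ⊕ E² →v F² → 0, where u(e) = (f¹(e), −φ(e)) and v(a, b) = ψ(a) + f²(b), is a split short exact sequence; explicitly, if and only if there exist R-linear maps γ : F¹ ⊕ E² → E¹ and δ : F² → F¹ ⊕ E² satisfying γ ∘ δ = 0, γ ∘ u = id_{E¹}, u ∘ γ + δ ∘ v = id_{F¹⊕E²}, and v ∘ δ = id_{F²}. -/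
/-!
Write `u = (f¹, -φ)` and `v = ψ + f²`. Maps `γ = (g¹, -η) : F¹ ⊕ E² → E¹` and
`δ = (ζ, g²) : F² → F¹ ⊕ E²` satisfy `γ ∘ u = id`, `u ∘ γ + δ ∘ v = id` and `v ∘ δ = id`
exactly when `g• = (g¹, g²)` is a quasi-inverse of `f•` with homotopies `η : g• ∘ f• ⇒ id`
and `ζ : f• ∘ g• ⇒ id` that are moreover compatible, `ζ ∘ f² = f¹ ∘ η`; the remaining
identity `γ ∘ δ = 0` is automatic for any splitting. Compatibility costs nothing: the defect
`θ = ζ ∘ f² - f¹ ∘ η` satisfies `θ ∘ φ = 0` and `ψ ∘ θ = 0`, so replacing `ζ` by `ζ - θ ∘ g²`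
keeps all homotopy identities and makes the defect vanish.
-/

/-- The 1-morphism `(f1, f2) : (E•, φ) → (F•, ψ)` of two-term complexes of `R`-modules is an
equivalence in the 2-category of two-term complexes: there are a 1-morphism `(g1, g2)` in the
opposite direction and 2-morphisms (homotopies) `g• ∘ f• ⇒ id` and `f• ∘ g• ⇒ id`. -/
def IsComplexEquivMor {R : Type*} [CommRing R] {E1 E2 F1 F2 : Type*}
    [AddCommGroup E1] [Module R E1] [AddCommGroup E2] [Module R E2]
    [AddCommGroup F1] [Module R F1] [AddCommGroup F2] [Module R F2]
    (φ : E1 →ₗ[R] E2) (ψ : F1 →ₗ[R] F2)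
    (f1 : E1 →ₗ[R] F1) (f2 : E2 →ₗ[R] F2) : Prop :=
  ∃ (g1 : F1 →ₗ[R] E1) (g2 : F2 →ₗ[R] E2) (η : E2 →ₗ[R] E1) (ζ : F2 →ₗ[R] F1),
    φ ∘ₗ g1 = g2 ∘ₗ ψ ∧
    LinearMap.id = g1 ∘ₗ f1 + η ∘ₗ φ ∧ LinearMap.id = g2 ∘ₗ f2 + φ ∘ₗ η ∧
    LinearMap.id = f1 ∘ₗ g1 + ζ ∘ₗ ψ ∧ LinearMap.id = f2 ∘ₗ g2 + ψ ∘ₗ ζ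

open LinearMap

theorem LinearMap.comp_eq_zero_of_splitting {R A B C : Type*} [Semiring R]
    [AddCommGroup A] [Module R A] [AddCommMonoid B] [Module R B] [AddCommMonoid C] [Module R C]
    {u : A →ₗ[R] B} {v : B →ₗ[R] C} {γ : B →ₗ[R] A} {δ : C →ₗ[R] B}
    (hγu : γ ∘ₗ u = LinearMap.id) (hsplit : u ∘ₗ γ + δ ∘ₗ v = LinearMap.id)
    (hvδ : v ∘ₗ δ = LinearMap.id) : γ ∘ₗ δ = 0 := by
  have h : γ ∘ₗ δ = γ ∘ₗ δ + γ ∘ₗ δ := calc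
    γ ∘ₗ δ = γ ∘ₗ (u ∘ₗ γ + δ ∘ₗ v) ∘ₗ δ := by rw [hsplit, id_comp]
    _ = (γ ∘ₗ u) ∘ₗ (γ ∘ₗ δ) + (γ ∘ₗ δ) ∘ₗ (v ∘ₗ δ) := by
      simp only [add_comp, comp_add, comp_assoc]
    _ = γ ∘ₗ δ + γ ∘ₗ δ := by rw [hγu, hvδ, id_comp, comp_id]
  exact left_eq_add.mp h

section TwoTermComplex

variable {R : Type*} [CommRing R] {E1 E2 F1 F2 : Type*}
    [AddCommGroup E1] [Module R E1] [AddCommGroup E2] [Module R E2]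
    [AddCommGroup F1] [Module R F1] [AddCommGroup F2] [Module R F2]
    {φ : E1 →ₗ[R] E2} {ψ : F1 →ₗ[R] F2} {f1 : E1 →ₗ[R] F1} {f2 : E2 →ₗ[R] F2}
    {g1 : F1 →ₗ[R] E1} {g2 : F2 →ₗ[R] E2} {η : E2 →ₗ[R] E1} {ζ : F2 →ₗ[R] F1}

variable (φ ψ f1 f2 g1 g2 η ζ) in
def IsHomotopyInverse : Prop :=
  φ ∘ₗ g1 = g2 ∘ₗ ψ ∧
    LinearMap.id = g1 ∘ₗ f1 + η ∘ₗ φ ∧ LinearMap.id = g2 ∘ₗ f2 + φ ∘ₗ η ∧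
    LinearMap.id = f1 ∘ₗ g1 + ζ ∘ₗ ψ ∧ LinearMap.id = f2 ∘ₗ g2 + ψ ∘ₗ ζ

theorem isComplexEquivMor_iff_exists_isHomotopyInverse :
    IsComplexEquivMor φ ψ f1 f2 ↔ ∃ g1 g2 η ζ, IsHomotopyInverse φ ψ f1 f2 g1 g2 η ζ :=
  Iff.rfl

theorem IsHomotopyInverse.exists_compatible (hf : ψ ∘ₗ f1 = f2 ∘ₗ φ)
    (h : IsHomotopyInverse φ ψ f1 f2 g1 g2 η ζ) :
    ∃ ζ' : F2 →ₗ[R] F1, IsHomotopyInverse φ ψ f1 f2 g1 g2 η ζ' ∧ ζ' ∘ₗ f2 = f1 ∘ₗ η := by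
  obtain ⟨hg, hE1, hE2, hF1, hF2⟩ := h
  set θ := ζ ∘ₗ f2 - f1 ∘ₗ η
  have hθφ : θ ∘ₗ φ = 0 := calc
    θ ∘ₗ φ = (ζ ∘ₗ ψ) ∘ₗ f1 - f1 ∘ₗ (η ∘ₗ φ) := by simp only [θ, sub_comp, comp_assoc, hf]
    _ = 0 := by
      rw [eq_sub_of_add_eq' hF1.symm, eq_sub_of_add_eq' hE1.symm]
      simp only [sub_comp, comp_sub, id_comp, comp_id, comp_assoc, sub_self]
  have hψθ : ψ ∘ₗ θ = 0 := calc
    ψ ∘ₗ θ = (ψ ∘ₗ ζ) ∘ₗ f2 - f2 ∘ₗ (φ ∘ₗ η) := by simp only [θ, comp_sub, ← comp_assoc, hf]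
    _ = 0 := by
      rw [eq_sub_of_add_eq' hF2.symm, eq_sub_of_add_eq' hE2.symm]
      simp only [sub_comp, comp_sub, id_comp, comp_id, comp_assoc, sub_self]
  refine ⟨ζ - θ ∘ₗ g2, ⟨hg, hE1, hE2, ?_, ?_⟩, ?_⟩
  · rw [sub_comp, comp_assoc, ← hg, ← comp_assoc, hθφ, zero_comp, sub_zero, hF1]
  · rw [comp_sub, ← comp_assoc, hψθ, zero_comp, sub_zero, hF2]
  · rw [sub_comp, comp_assoc, eq_sub_of_add_eq hE2.symm, comp_sub, comp_id, ← comp_assoc, hθφ,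
      zero_comp, sub_zero, sub_sub_cancel]

variable (φ ψ f1 f2 g1 g2 η ζ) in
theorem isSplitting_coprod_prod_iff :
    (g1.coprod (-η) ∘ₗ f1.prod (-φ) = LinearMap.id ∧
      f1.prod (-φ) ∘ₗ g1.coprod (-η) + ζ.prod g2 ∘ₗ ψ.coprod f2 = LinearMap.id ∧
      ψ.coprod f2 ∘ₗ ζ.prod g2 = LinearMap.id) ↔
    IsHomotopyInverse φ ψ f1 f2 g1 g2 η ζ ∧ ζ ∘ₗ f2 = f1 ∘ₗ η := by
  have hγu : g1.coprod (-η) ∘ₗ f1.prod (-φ) = LinearMap.id ↔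
      LinearMap.id = g1 ∘ₗ f1 + η ∘ₗ φ := by
    rw [coprod_comp_prod, neg_comp, comp_neg, neg_neg, eq_comm]
  have hvδ : ψ.coprod f2 ∘ₗ ζ.prod g2 = LinearMap.id ↔ LinearMap.id = f2 ∘ₗ g2 + ψ ∘ₗ ζ := by
    rw [coprod_comp_prod, add_comm, eq_comm]
  have hsplit : f1.prod (-φ) ∘ₗ g1.coprod (-η) + ζ.prod g2 ∘ₗ ψ.coprod f2 = LinearMap.id ↔
      (LinearMap.id = f1 ∘ₗ g1 + ζ ∘ₗ ψ ∧ φ ∘ₗ g1 = g2 ∘ₗ ψ) ∧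
        (ζ ∘ₗ f2 = f1 ∘ₗ η ∧ LinearMap.id = g2 ∘ₗ f2 + φ ∘ₗ η) := by
    rw [prod_ext_iff]
    simp only [LinearMap.ext_iff, Prod.ext_iff, forall_and, comp_apply, LinearMap.add_apply,
      coprod_apply, prod_apply, Function.prod_apply, inl_apply, inr_apply, id_apply,
      LinearMap.neg_apply, map_zero, map_neg, add_zero, zero_add, Prod.fst_add, Prod.snd_add,
      neg_neg, neg_add_eq_zero, add_comm (φ (η _))]
    simp only [eq_comm]
  rw [hγu, hsplit, hvδ, IsHomotopyInverse]
  tauto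

end TwoTermComplex

/-- A 1-morphism `f• : (E•, φ) → (F•, ψ)` of two-term complexes of `R`-modules is an equivalence
if and only if `0 → E¹ → F¹ ⊕ E² → F² → 0`, with maps `u : e ↦ (f1 e, -φ e)` and
`v : (a, b) ↦ ψ a + f2 b`, is a split short exact sequence: there exist `γ : F¹ ⊕ E² → E¹` and
`δ : F² → F¹ ⊕ E²` with `γ ∘ δ = 0`, `γ ∘ u = id`, `u ∘ γ + δ ∘ v = id` and `v ∘ δ = id`. -/
theorem isComplexEquivMor_iff_split {R : Type*} [CommRing R] {E1 E2 F1 F2 : Type*}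
    [AddCommGroup E1] [Module R E1] [AddCommGroup E2] [Module R E2]
    [AddCommGroup F1] [Module R F1] [AddCommGroup F2] [Module R F2]
    (φ : E1 →ₗ[R] E2) (ψ : F1 →ₗ[R] F2)
    (f1 : E1 →ₗ[R] F1) (f2 : E2 →ₗ[R] F2)
    (hf : ψ ∘ₗ f1 = f2 ∘ₗ φ) :
    IsComplexEquivMor φ ψ f1 f2 ↔
      ∃ (γ : (F1 × E2) →ₗ[R] E1) (δ : F2 →ₗ[R] F1 × E2),
        γ ∘ₗ δ = 0 ∧
        γ ∘ₗ (f1.prod (-φ)) = LinearMap.id ∧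
        (f1.prod (-φ)) ∘ₗ γ
            + δ ∘ₗ (ψ ∘ₗ LinearMap.fst R F1 E2 + f2 ∘ₗ LinearMap.snd R F1 E2)
          = LinearMap.id ∧
        (ψ ∘ₗ LinearMap.fst R F1 E2 + f2 ∘ₗ LinearMap.snd R F1 E2) ∘ₗ δ = LinearMap.id := by
  -- `ψ.coprod f2` is by definition `ψ ∘ₗ fst + f2 ∘ₗ snd`
  change _ ↔ ∃ γ δ, γ ∘ₗ δ = 0 ∧ γ ∘ₗ f1.prod (-φ) = LinearMap.id ∧
    f1.prod (-φ) ∘ₗ γ + δ ∘ₗ ψ.coprod f2 = LinearMap.id ∧ ψ.coprod f2 ∘ₗ δ = LinearMap.id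
  rw [isComplexEquivMor_iff_exists_isHomotopyInverse]
  constructor
  · rintro ⟨g1, g2, η, ζ, h⟩
    obtain ⟨ζ', h', hcompat⟩ := h.exists_compatible hf
    obtain ⟨hγu, hsplit, hvδ⟩ :=
      (isSplitting_coprod_prod_iff φ ψ f1 f2 g1 g2 η ζ').2 ⟨h', hcompat⟩
    exact ⟨_, _, comp_eq_zero_of_splitting hγu hsplit hvδ, hγu, hsplit, hvδ⟩
  · rintro ⟨γ, δ, -, hsplit⟩
    have hγ : γ = (γ ∘ₗ inl R F1 E2).coprod (-(-(γ ∘ₗ inr R F1 E2))) := by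
      rw [neg_neg, coprod_comp_inl_inr]
    have hδ : δ = (fst R F1 E2 ∘ₗ δ).prod (snd R F1 E2 ∘ₗ δ) := rfl
    rw [hγ, hδ, isSplitting_coprod_prod_iff] at hsplit
    exact ⟨_, _, _, _, hsplit.1⟩
end

section
/- Let 𝒞 be a category, let 𝒳, 𝒴, 𝒵 be categories over 𝒞, let f : 𝒳 → 𝒴, g : 𝒴 → 𝒵 and h : 𝒳 → 𝒵 be 1-morphisms over 𝒞 with g strongly representable, and let η : g ∘ f ⇒ h be a 2-morphism over 𝒞. Then there exist a 1-morphism f′ : 𝒳 → 𝒴 over 𝒞 with g ∘ f′ = h (an equality of functors) and a natural isomorphism ζ : f ⇒ f′ such that g(ζ_X) = η_X for every object X of 𝒳; moreover the pair (f′, ζ) is unique with these properties. -/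
open CategoryTheory

universe v₁ v₂ v₃ v₄ u₁ u₂ u₃ u₄

/-- A 1-morphism `g : 𝒴 → 𝒵` of categories over `𝒞` (i.e. a functor commuting with the
projection functors) is *strongly representable* if whenever `A` is an object of `𝒴` and
`b : g(A) ≅ B'` is an isomorphism in `𝒵` projecting to an identity in `𝒞`, there exist a
unique object `A'` of `𝒴` and a unique isomorphism `a : A ≅ A'` with `g(A') = B'` and
`g(a) = b`. -/
def StronglyRepresentable {Y : Type u₁} [Category.{v₁} Y] {Z : Type u₂} [Category.{v₂} Z]
    {C : Type u₃} [Category.{v₃} C] (pZ : Z ⥤ C) (g : Y ⥤ Z) : Prop :=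
  ∀ (A : Y) (B' : Z) (b : g.obj A ≅ B'),
    (∃ e : pZ.obj (g.obj A) = pZ.obj B', pZ.map b.hom = eqToHom e) →
    ∃! p : (Σ' A' : Y, A ≅ A'),
      ∃ e' : g.obj p.1 = B', g.map p.2.hom ≫ eqToHom e' = b.hom

lemma iso_hom_of_heq {Y : Type u₁} [Category.{v₁} Y] {x y y' : Y} (hy : y = y')
    (a : x ≅ y) (b : x ≅ y') (hab : HEq a b) : a.hom = b.hom ≫ eqToHom hy.symm := by
  subst hy; cases hab; simp

lemma iso_inv_of_heq {Y : Type u₁} [Category.{v₁} Y] {x y y' : Y} (hy : y = y')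
    (a : x ≅ y) (b : x ≅ y') (hab : HEq a b) : a.inv = eqToHom hy ≫ b.inv := by
  subst hy; cases hab; simp


/-- Let `𝒳, 𝒴, 𝒵` be categories over `𝒞`, let `f : 𝒳 → 𝒴`, `g : 𝒴 → 𝒵`, `h : 𝒳 → 𝒵` be
1-morphisms over `𝒞` with `g` strongly representable, and let `η : g ∘ f ⇒ h` be a
2-morphism over `𝒞`.  Then there exist a 1-morphism `f' : 𝒳 → 𝒴` over `𝒞` with
`g ∘ f' = h` (an equality of functors) and a natural isomorphism `ζ : f ⇒ f'` with
`g(ζ_A) = η_A` for every object `A` of `𝒳`; moreover the pair `(f', ζ)` is unique with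
these properties. -/
theorem strongly_representable_lift
    {C : Type u₁} [Category.{v₁} C] {X : Type u₂} [Category.{v₂} X]
    {Y : Type u₃} [Category.{v₃} Y] {Z : Type u₄} [Category.{v₄} Z]
    (pX : X ⥤ C) (pY : Y ⥤ C) (pZ : Z ⥤ C)
    (f : X ⥤ Y) (g : Y ⥤ Z) (h : X ⥤ Z)
    (hf : f ⋙ pY = pX) (hg : g ⋙ pZ = pY) (hh : h ⋙ pZ = pX)
    (hrep : StronglyRepresentable pZ g)
    (η : f ⋙ g ≅ h)
    (hη : ∀ A : X, ∃ e : pZ.obj (g.obj (f.obj A)) = pZ.obj (h.obj A),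
      pZ.map (η.hom.app A) = eqToHom e) :
    ∃! q : (Σ' f' : X ⥤ Y, f ≅ f'),
      q.1 ⋙ pY = pX ∧ q.1 ⋙ g = h ∧
      ∀ A : X, ∃ e : g.obj (q.1.obj A) = h.obj A,
        g.map (q.2.hom.app A) ≫ eqToHom e = η.hom.app A := by
  classical
  have H : ∀ A : X, ∃! p : (Σ' A' : Y, f.obj A ≅ A'),
      ∃ e' : g.obj p.1 = h.obj A, g.map p.2.hom ≫ eqToHom e' = η.hom.app A :=
    fun A => hrep (f.obj A) (h.obj A) (η.app A) (hη A)
  choose p hp hup using H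
  choose e he using hp
  -- key computations for g on the chosen isomorphisms
  have ghom : ∀ A : X, g.map (p A).2.hom = η.hom.app A ≫ eqToHom (e A).symm := by
    intro A
    rw [← he A]; simp
  have ginv : ∀ A : X, g.map (p A).2.inv = eqToHom (e A) ≫ η.inv.app A := by
    intro A
    have : g.map (p A).2.hom ≫ g.map (p A).2.inv = 𝟙 _ := by
      rw [← g.map_comp]; simp
    rw [ghom] at this
    calc g.map (p A).2.inv
        = (eqToHom (e A) ≫ η.inv.app A) ≫
            ((η.hom.app A ≫ eqToHom (e A).symm) ≫ g.map (p A).2.inv) := by simp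
      _ = eqToHom (e A) ≫ η.inv.app A := by rw [this]; simp
  -- the lifted functor
  let F : X ⥤ Y :=
    { obj := fun A => (p A).1
      map := fun {A B} u => (p A).2.inv ≫ f.map u ≫ (p B).2.hom
      map_id := by intro A; simp
      map_comp := by intro A B D u v; simp }
  have hFobj : ∀ A, F.obj A = (p A).1 := fun _ => rfl
  have hFmap : ∀ {A B} (u : A ⟶ B), F.map u = (p A).2.inv ≫ f.map u ≫ (p B).2.hom :=
    fun _ => rfl
  let ζ : f ≅ F := NatIso.ofComponents (fun A => (p A).2)
    (by intro A B u; simp [hFmap u])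
  have hFg : F ⋙ g = h := by
    refine CategoryTheory.Functor.ext (fun A => e A) ?_
    intro A B u
    have nat : η.inv.app A ≫ g.map (f.map u) ≫ η.hom.app B = h.map u := by
      have := η.hom.naturality u
      simp only [Functor.comp_map] at this
      rw [this]; simp
    simp only [Functor.comp_map, hFmap u, g.map_comp, ginv, ghom]
    rw [← nat]
    simp
  have hFpY : F ⋙ pY = pX := by
    rw [← hg, ← Functor.assoc, hFg, hh]
  refine ⟨⟨F, ζ⟩, ⟨hFpY, hFg, ?_⟩, ?_⟩
  · intro A
    exact ⟨e A, he A⟩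
  · rintro ⟨F', ζ'⟩ ⟨h1, h2, h3⟩
    have hpt : ∀ A : X, (⟨F'.obj A, ζ'.app A⟩ : Σ' A' : Y, f.obj A ≅ A') = p A := by
      intro A
      exact hup A ⟨F'.obj A, ζ'.app A⟩ (h3 A)
    have hobj : ∀ A : X, F'.obj A = (p A).1 := by
      intro A; exact congrArg PSigma.fst (hpt A)
    have hiso : ∀ A : X, HEq (ζ'.app A) (p A).2 := by
      intro A
      have := hpt A
      exact (PSigma.mk.injEq _ _ _ _ ▸ this).2
    have hF : F' = F := by
      refine CategoryTheory.Functor.ext hobj ?_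
      intro A B u
      have nat : f.map u ≫ (ζ'.app B).hom = (ζ'.app A).hom ≫ F'.map u :=
        ζ'.hom.naturality u
      have hmap : F'.map u = (ζ'.app A).inv ≫ f.map u ≫ (ζ'.app B).hom := by
        rw [nat]; simp
      rw [hmap, iso_hom_of_heq (hobj B) (ζ'.app B) (p B).2 (hiso B),
        iso_inv_of_heq (hobj A) (ζ'.app A) (p A).2 (hiso A), hFmap u]
      simp
    subst hF
    have hz : ζ' = ζ := by
      ext A
      have := iso_hom_of_heq (hobj A) (ζ'.app A) (p A).2 (hiso A)
      simpa [ζ] using this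
    rw [hz]
end

section
/- Let 𝒞 be a category, let 𝒳, 𝒴, 𝒵 be categories over 𝒞, and let g : 𝒳 → 𝒵 and h : 𝒴 → 𝒵 be 1-morphisms over 𝒞 with g strongly representable. Define a category 𝒲 whose objects are pairs (A, B) with A an object of 𝒳 and B an object of 𝒴 such that g(A) = h(B), and whose morphisms (a, b) : (A, B) → (A′, B′) are pairs of morphisms a : A → A′ in 𝒳 and b : B → B′ in 𝒴 with g(a) = h(b); let p_𝒲(A, B) = p_𝒴(B) on objects and p_𝒲(a, b) = p_𝒴(b) on morphisms, and let e : 𝒲 → 𝒳 and f : 𝒲 → 𝒴 be the projection functors. Then: (i) 𝒲 is a category over 𝒞 and e, f are 1-morphisms over 𝒞 satisfying g ∘ e = h ∘ f; (ii) f is strongly representable; (iii) if h is also strongly representable then e is strongly representable; and (iv) the square is 2-Cartesian: for every category 𝒯 over 𝒞, all 1-morphisms u : 𝒯 → 𝒳 and v : 𝒯 → 𝒴 over 𝒞, and every 2-morphism η : g ∘ u ⇒ h ∘ v over 𝒞, there exist a 1-morphism w : 𝒯 → 𝒲 over 𝒞 and 2-morphisms ζ : e ∘ w ⇒ u and θ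 : f ∘ w ⇒ v over 𝒞 such that h(θ_T) = η_T ∘ g(ζ_T) for every object T of 𝒯; and for any other such triple (w̃, ζ̃, θ̃) there is a unique natural isomorphism ε : w̃ ⇒ w with ζ̃_T = ζ_T ∘ e(ε_T) and θ̃_T = θ_T ∘ f(ε_T) for all objects T of 𝒯. -/
/-!
Since `g` is strongly representable, each component `η_T : g(u T) ≅ h(v T)` lifts uniquely
through `g` to an isomorphism `u T ≅ A_T` with `g(A_T) = h(v T)`. Replacing `u` by the
isomorphic functor `T ↦ A_T` turns `η` into an identity, so the square commutes strictly and
factors through `𝒲`. The same lifting applied to `h(b)` shows that `f` is strongly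
representable, and `e` is `f` for the swapped square `𝒴 ×_𝒵 𝒳`. The comparison `ε` is unique
because a morphism of `𝒲` is determined by its two components.
-/

open CategoryTheory

universe v₁ v₂ v₃ v₄ v₅ u₁ u₂ u₃ u₄ u₅

section FiberProduct

variable {X : Type u₁} [Category.{v₁} X] {Y : Type u₂} [Category.{v₂} Y]
  {Z : Type u₃} [Category.{v₃} Z] {C : Type u₄} [Category.{v₄} C]

/-- Objects of the fibre product category `𝒲 = 𝒳 ×_𝒵 𝒴`: pairs `(A, B)` of objects with
`g(A) = h(B)`. -/
structure FiberObj (g : X ⥤ Z) (h : Y ⥤ Z) : Type (max u₁ u₂) where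
  left : X
  right : Y
  w : g.obj left = h.obj right

/-- Morphisms `(a, b) : (A, B) → (A', B')` in the fibre product category: pairs of morphisms
with `g(a) = h(b)`. -/
structure FiberHom {g : X ⥤ Z} {h : Y ⥤ Z} (P Q : FiberObj g h) : Type (max v₁ v₂) where
  fst : P.left ⟶ Q.left
  snd : P.right ⟶ Q.right
  w : g.map fst ≫ eqToHom Q.w = eqToHom P.w ≫ h.map snd

theorem FiberHom.ext' {g : X ⥤ Z} {h : Y ⥤ Z} {P Q : FiberObj g h}
    {u v : FiberHom P Q} (h1 : u.fst = v.fst) (h2 : u.snd = v.snd) : u = v := by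
  cases u; cases v; cases h1; cases h2; rfl

instance fiberCategory (g : X ⥤ Z) (h : Y ⥤ Z) : Category (FiberObj g h) where
  Hom := FiberHom
  id P := ⟨𝟙 P.left, 𝟙 P.right, by simp⟩
  comp := fun {P Q R} u v =>
    ⟨u.fst ≫ v.fst, u.snd ≫ v.snd, by
      rw [Functor.map_comp, Functor.map_comp, Category.assoc, v.w, ← Category.assoc, u.w,
        Category.assoc]⟩
  id_comp := fun {P Q} u => FiberHom.ext' (Category.id_comp u.fst) (Category.id_comp u.snd)
  comp_id := fun {P Q} u => FiberHom.ext' (Category.comp_id u.fst) (Category.comp_id u.snd)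
  assoc := fun {P Q R S} u v w =>
    FiberHom.ext' (Category.assoc u.fst v.fst w.fst) (Category.assoc u.snd v.snd w.snd)

/-- The projection 1-morphism `e : 𝒲 → 𝒳`. -/
def fiberFst (g : X ⥤ Z) (h : Y ⥤ Z) : FiberObj g h ⥤ X where
  obj P := P.left
  map u := u.fst
  map_id _ := rfl
  map_comp _ _ := rfl

/-- The projection 1-morphism `f : 𝒲 → 𝒴`. -/
def fiberSnd (g : X ⥤ Z) (h : Y ⥤ Z) : FiberObj g h ⥤ Y where
  obj P := P.right
  map u := u.snd
  map_id _ := rfl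
  map_comp _ _ := rfl

/-- The projection functor `p_𝒲 : 𝒲 → 𝒞`, `(A, B) ↦ p_𝒴(B)`, making `𝒲` a category
over `𝒞`. -/
def fiberProj (g : X ⥤ Z) (h : Y ⥤ Z) (pY : Y ⥤ C) : FiberObj g h ⥤ C :=
  fiberSnd g h ⋙ pY


namespace FiberObj

variable {g : X ⥤ Z} {h : Y ⥤ Z}

def isoMk {P Q : FiberObj g h} (a : P.left ≅ Q.left) (b : P.right ≅ Q.right)
    (w : g.map a.hom ≫ eqToHom Q.w = eqToHom P.w ≫ h.map b.hom) : P ≅ Q where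
  hom := ⟨a.hom, b.hom, w⟩
  inv := ⟨a.inv, b.inv, by
    rw [← cancel_epi (g.map a.hom), ← Category.assoc, ← g.map_comp, a.hom_inv_id, g.map_id,
      Category.id_comp, reassoc_of% w, ← h.map_comp, b.hom_inv_id, h.map_id,
      Category.comp_id]⟩
  hom_inv_id := FiberHom.ext' a.hom_inv_id b.hom_inv_id
  inv_hom_id := FiberHom.ext' a.inv_hom_id b.inv_hom_id

theorem psigma_iso_ext {P : FiberObj g h} {p q : Σ' Q : FiberObj g h, P ≅ Q}
    (hfst : (⟨p.1.left, (fiberFst g h).mapIso p.2⟩ : Σ' A, P.left ≅ A) =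
      ⟨q.1.left, (fiberFst g h).mapIso q.2⟩)
    (hsnd : (⟨p.1.right, (fiberSnd g h).mapIso p.2⟩ : Σ' B, P.right ≅ B) =
      ⟨q.1.right, (fiberSnd g h).mapIso q.2⟩) : p = q := by
  obtain ⟨⟨A, B, w⟩, i⟩ := p
  obtain ⟨⟨A', B', w'⟩, i'⟩ := q
  obtain ⟨rfl, hfst⟩ := PSigma.mk.inj hfst
  obtain ⟨rfl, hsnd⟩ := PSigma.mk.inj hsnd
  congr
  exact Iso.ext (FiberHom.ext' (congrArg Iso.hom (eq_of_heq hfst))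
    (congrArg Iso.hom (eq_of_heq hsnd)))

end FiberObj

theorem fiberFst_comp_eq_fiberSnd_comp (g : X ⥤ Z) (h : Y ⥤ Z) :
    fiberFst g h ⋙ g = fiberSnd g h ⋙ h := by
  refine CategoryTheory.Functor.ext (fun P => P.w) fun P Q k => ?_
  change g.map k.fst = eqToHom P.w ≫ h.map k.snd ≫ eqToHom Q.w.symm
  rw [← reassoc_of% k.w, eqToHom_trans, eqToHom_refl, Category.comp_id]

def fiberSwap (g : X ⥤ Z) (h : Y ⥤ Z) : FiberObj g h ⥤ FiberObj h g where
  obj P := ⟨P.right, P.left, P.w.symm⟩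
  map {P Q} k := ⟨k.snd, k.fst, by
    rw [← cancel_epi (eqToHom P.w), ← reassoc_of% k.w]
    simp⟩

theorem stronglyRepresentable_fiberSnd {pZ : Z ⥤ C} {g : X ⥤ Z} (h : Y ⥤ Z)
    (hg : StronglyRepresentable pZ g) : StronglyRepresentable (h ⋙ pZ) (fiberSnd g h) := by
  rintro P B' (b : P.right ≅ B')
    ⟨(eb : pZ.obj (h.obj P.right) = _), (heb : pZ.map (h.map b.hom) = eqToHom eb)⟩
  obtain ⟨⟨A', a⟩, ⟨e', ha⟩, huniq⟩ := hg P.left (h.obj B') (eqToIso P.w ≪≫ h.mapIso b)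
    ⟨(congrArg pZ.obj P.w).trans eb, by simp [eqToHom_map, heb]⟩
  simp only [Iso.trans_hom, eqToIso.hom, Functor.mapIso_hom] at ha
  refine ⟨⟨⟨A', B', e'⟩, FiberObj.isoMk a b ha⟩, ⟨rfl, Category.comp_id _⟩, ?_⟩
  rintro ⟨Q, i⟩ ⟨rfl, hi⟩
  replace hi : i.hom.snd = b.hom := by simpa [fiberSnd] using hi
  -- The first component of any lift of `b` lifts `h(b)` along `g`, so it is `⟨A', a⟩`.
  refine FiberObj.psigma_iso_ext (huniq _ ⟨Q.w, ?_⟩) ?_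
  · simp only [Iso.trans_hom, eqToIso.hom, Functor.mapIso_hom]
    rw [← hi]
    exact i.hom.w
  · exact congrArg (PSigma.mk Q.right) (Iso.ext hi)

theorem stronglyRepresentable_fiberFst {pZ : Z ⥤ C} (g : X ⥤ Z) {h : Y ⥤ Z}
    (hh : StronglyRepresentable pZ h) : StronglyRepresentable (g ⋙ pZ) (fiberFst g h) := by
  intro P A' a ha
  -- `fiberSwap` is an involution up to definitional equality, and it turns lifts along
  -- `fiberFst g h` into lifts along `fiberSnd h g`.
  have hswap : Function.Bijective fun p : Σ' Q : FiberObj g h, P ≅ Q =>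
      (⟨(fiberSwap g h).obj p.1, (fiberSwap g h).mapIso p.2⟩ :
        Σ' Q' : FiberObj h g, (fiberSwap g h).obj P ≅ Q') :=
    Function.bijective_iff_has_inverse.mpr
      ⟨fun p => ⟨(fiberSwap h g).obj p.1, (fiberSwap h g).mapIso p.2⟩, fun _ => rfl, fun _ => rfl⟩
  exact hswap.existsUnique_iff.mp
    (stronglyRepresentable_fiberSnd g hh ((fiberSwap g h).obj P) A' a ha)

theorem exists_eq_eqToHom_of_comp {A B D : C} {f : A ⟶ B} {k : B ⟶ D}
    (hk : ∃ e, k = eqToHom e) {e' : A = D} (hfk : f ≫ k = eqToHom e') : ∃ e, f = eqToHom e := by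
  obtain ⟨e, rfl⟩ := hk
  rw [comp_eqToHom_iff, eqToHom_trans] at hfk
  exact ⟨_, hfk⟩

section TwoCartesian

variable {T : Type u₅} [Category.{v₅} T] {g : X ⥤ Z} {h : Y ⥤ Z}

def fiberLift (F : T ⥤ X) (G : T ⥤ Y) (hFG : F ⋙ g = G ⋙ h) : T ⥤ FiberObj g h where
  obj t := ⟨F.obj t, G.obj t, Functor.congr_obj hFG t⟩
  map k := ⟨F.map k, G.map k, by simp [← Functor.comp_map, Functor.congr_hom hFG k]⟩
  map_id t := FiberHom.ext' (F.map_id t) (G.map_id t)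
  map_comp k l := FiberHom.ext' (F.map_comp k l) (G.map_comp k l)

theorem map_inv_comp_eq_eqToHom {V : Type*} [Category V] (F : V ⥤ Z) {A B : V} {D : Z}
    (a : A ≅ B) (e : F.obj B = D) {f : F.obj A ⟶ D} (ha : F.map a.hom ≫ eqToHom e = f) :
    F.map a.inv ≫ f = eqToHom e := by
  rw [← ha, ← F.mapIso_inv, ← F.mapIso_hom, Iso.inv_hom_id_assoc]

theorem copyObj_comp_eq_of_hom_app_eq {u : T ⥤ X} {v : T ⥤ Y} (η : u ⋙ g ≅ v ⋙ h)
    {A : T → X} (a : ∀ t, u.obj t ≅ A t) (e : ∀ t, g.obj (A t) = h.obj (v.obj t))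
    (ha : ∀ t, g.map (a t).hom ≫ eqToHom (e t) = η.hom.app t) :
    u.copyObj A a ⋙ g = v ⋙ h :=
  Functor.ext_of_iso (Functor.isoWhiskerRight (u.isoCopyObj A a).symm g ≪≫ η) e fun t =>
    map_inv_comp_eq_eqToHom g (a t) (e t) (ha t)

def fiberNatIsoMk {w w' : T ⥤ FiberObj g h} (α : w ⋙ fiberFst g h ≅ w' ⋙ fiberFst g h)
    (β : w ⋙ fiberSnd g h ≅ w' ⋙ fiberSnd g h)
    (hαβ : ∀ t, g.map (α.hom.app t) ≫ eqToHom (w'.obj t).w =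
      eqToHom (w.obj t).w ≫ h.map (β.hom.app t)) : w ≅ w' :=
  NatIso.ofComponents (fun t => FiberObj.isoMk (α.app t) (β.app t) (hαβ t)) fun k =>
    FiberHom.ext' (α.hom.naturality k) (β.hom.naturality k)

theorem existsUnique_iso_of_compatible {u : T ⥤ X} {v : T ⥤ Y} (η : u ⋙ g ≅ v ⋙ h)
    {w w' : T ⥤ FiberObj g h} (ζ : w ⋙ fiberFst g h ≅ u) (θ : w ⋙ fiberSnd g h ≅ v)
    (ζ' : w' ⋙ fiberFst g h ≅ u) (θ' : w' ⋙ fiberSnd g h ≅ v)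
    (hw : ∀ t, g.map (ζ.hom.app t) ≫ η.hom.app t = eqToHom (w.obj t).w ≫ h.map (θ.hom.app t))
    (hw' : ∀ t,
      g.map (ζ'.hom.app t) ≫ η.hom.app t = eqToHom (w'.obj t).w ≫ h.map (θ'.hom.app t)) :
    ∃! ε : w' ≅ w, ∀ t,
      ζ'.hom.app t = (fiberFst g h).map (ε.hom.app t) ≫ ζ.hom.app t ∧
      θ'.hom.app t = (fiberSnd g h).map (ε.hom.app t) ≫ θ.hom.app t := by
  have hw_inv : ∀ t,
      g.map (ζ.inv.app t) ≫ eqToHom (w.obj t).w = η.hom.app t ≫ h.map (θ.inv.app t) := by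
    intro t
    refine (Iso.inv_comp_eq (g.mapIso (ζ.app t))).mpr ?_
    exact ((Iso.eq_comp_inv (h.mapIso (θ.app t))).mpr (hw t).symm).trans (Category.assoc _ _ _)
  refine ⟨fiberNatIsoMk (ζ' ≪≫ ζ.symm) (θ' ≪≫ θ.symm) fun t => ?_, fun t => ⟨?_, ?_⟩,
    fun ε hε => ?_⟩
  · simp only [Iso.trans_hom, Iso.symm_hom, NatTrans.comp_app, Functor.map_comp,
      Category.assoc, hw_inv]
    exact ((reassoc_of% (hw' t)) _).trans
      ((Category.assoc _ _ _).trans (congrArg _ (h.map_comp _ _).symm))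
  · change _ = (ζ'.hom.app t ≫ ζ.inv.app t) ≫ ζ.hom.app t
    simp
  · change _ = (θ'.hom.app t ≫ θ.inv.app t) ≫ θ.hom.app t
    simp
  · ext t
    exact FiberHom.ext' ((Iso.eq_comp_inv (ζ.app t)).mpr (hε t).1.symm)
      ((Iso.eq_comp_inv (θ.app t)).mpr (hε t).2.symm)

end TwoCartesian

/-- The explicit construction of the fibre product `𝒲 = 𝒳 ×_𝒵 𝒴` of categories over `𝒞`
along a strongly representable 1-morphism `g`: (i) the projections `e : 𝒲 → 𝒳` and
`f : 𝒲 → 𝒴` are 1-morphisms over `𝒞` with `g ∘ e = h ∘ f`; (ii) `f` is strongly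
representable; (iii) if `h` is strongly representable then so is `e`; (iv) the square is
2-Cartesian: for every category `𝒯` over `𝒞`, 1-morphisms `u : 𝒯 → 𝒳`, `v : 𝒯 → 𝒴` over
`𝒞` and 2-morphism `η : g ∘ u ⇒ h ∘ v` over `𝒞`, there are a 1-morphism `w : 𝒯 → 𝒲` over
`𝒞` and 2-morphisms `ζ : e ∘ w ⇒ u`, `θ : f ∘ w ⇒ v` over `𝒞` with
`h(θ_T) = η_T ∘ g(ζ_T)` for all `T`, and for any other such triple `(w', ζ', θ')` there is a
unique natural isomorphism `ε : w' ⇒ w` with `ζ'_T = ζ_T ∘ e(ε_T)` and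
`θ'_T = θ_T ∘ f(ε_T)` for all `T`. -/
theorem fiberProduct_of_stronglyRepresentable
    (pX : X ⥤ C) (pY : Y ⥤ C) (pZ : Z ⥤ C) (g : X ⥤ Z) (h : Y ⥤ Z)
    (hg : g ⋙ pZ = pX) (hh : h ⋙ pZ = pY)
    (hrep : StronglyRepresentable pZ g) :
    (fiberFst g h ⋙ pX = fiberProj g h pY) ∧
    (fiberSnd g h ⋙ pY = fiberProj g h pY) ∧
    (fiberFst g h ⋙ g = fiberSnd g h ⋙ h) ∧
    StronglyRepresentable pY (fiberSnd g h) ∧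
    (StronglyRepresentable pZ h → StronglyRepresentable pX (fiberFst g h)) ∧
    (∀ (T : Type u₅) [Category.{v₅} T], ∀ (pT : T ⥤ C) (u : T ⥤ X) (v : T ⥤ Y),
      u ⋙ pX = pT → v ⋙ pY = pT →
      ∀ η : u ⋙ g ≅ v ⋙ h,
        (∀ t : T, ∃ e : pZ.obj (g.obj (u.obj t)) = pZ.obj (h.obj (v.obj t)),
          pZ.map (η.hom.app t) = eqToHom e) →
        ∃ (w : T ⥤ FiberObj g h) (_ : w ⋙ fiberProj g h pY = pT)
          (ζ : w ⋙ fiberFst g h ≅ u) (θ : w ⋙ fiberSnd g h ≅ v),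
          (∀ t : T, ∃ e : pX.obj ((w.obj t).left) = pX.obj (u.obj t),
            pX.map (ζ.hom.app t) = eqToHom e) ∧
          (∀ t : T, ∃ e : pY.obj ((w.obj t).right) = pY.obj (v.obj t),
            pY.map (θ.hom.app t) = eqToHom e) ∧
          (∀ t : T, g.map (ζ.hom.app t) ≫ η.hom.app t
            = eqToHom (w.obj t).w ≫ h.map (θ.hom.app t)) ∧
          (∀ (w' : T ⥤ FiberObj g h), w' ⋙ fiberProj g h pY = pT →
            ∀ (ζ' : w' ⋙ fiberFst g h ≅ u) (θ' : w' ⋙ fiberSnd g h ≅ v),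
              (∀ t : T, ∃ e : pX.obj ((w'.obj t).left) = pX.obj (u.obj t),
                pX.map (ζ'.hom.app t) = eqToHom e) →
              (∀ t : T, ∃ e : pY.obj ((w'.obj t).right) = pY.obj (v.obj t),
                pY.map (θ'.hom.app t) = eqToHom e) →
              (∀ t : T, g.map (ζ'.hom.app t) ≫ η.hom.app t
                = eqToHom (w'.obj t).w ≫ h.map (θ'.hom.app t)) →
              ∃! ε : w' ≅ w,
                ∀ t : T,
                  ζ'.hom.app t = (fiberFst g h).map (ε.hom.app t) ≫ ζ.hom.app t ∧
                  θ'.hom.app t = (fiberSnd g h).map (ε.hom.app t) ≫ θ.hom.app t)) := by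
  subst hg hh
  refine ⟨congrArg (· ⋙ pZ) (fiberFst_comp_eq_fiberSnd_comp g h), rfl,
    fiberFst_comp_eq_fiberSnd_comp g h, stronglyRepresentable_fiberSnd h hrep,
    stronglyRepresentable_fiberFst g, ?_⟩
  intro T _ pT u v _ hv η hη
  choose p hp using fun t => (hrep _ _ (η.app t) (hη t)).exists
  choose e he using hp
  have hsq := copyObj_comp_eq_of_hom_app_eq η (fun t => (p t).2) e he
  have hinv t : g.map (p t).2.inv ≫ η.hom.app t = eqToHom (e t) :=
    map_inv_comp_eq_eqToHom g (p t).2 (e t) (he t)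
  refine ⟨fiberLift _ v hsq, hv, (u.isoCopyObj (fun t => (p t).1) fun t => (p t).2).symm,
    Iso.refl v, fun t => ?_, fun t => ⟨rfl, (h ⋙ pZ).map_id _⟩, ?hcomp,
    fun w' _ ζ' θ' _ _ hw' => existsUnique_iso_of_compatible η _ _ ζ' θ' ?hcomp hw'⟩
  · exact exists_eq_eqToHom_of_comp (hη t)
      ((pZ.map_comp _ _).symm.trans ((congrArg pZ.map (hinv t)).trans (eqToHom_map _ _)))
  · exact fun t =>
      (hinv t).trans ((Category.comp_id _).symm.trans (congrArg _ (h.map_id _).symm))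

end FiberProduct
end

section
/- Let X be a manifold of dimension m, let G be a finite group, and let r : G → Diff(X) be an action of G on X, i.e. each r(γ) : X → X is smooth with smooth inverse, r(γδ) = r(γ) ∘ r(δ) for all γ, δ ∈ G, and r(1) = id_X. Let X^G = {x ∈ X : r(γ)(x) = x for all γ ∈ G} be the fixed point locus. Then X^G is closed in X, and for every x ∈ X^G there exist an open neighbourhood U of x in X, a smooth map φ : U → ℝ^m which is a homeomorphism onto an open subset of ℝ^m with smooth inverse, and a linear subspace L ⊆ ℝ^m, such that φ(U ∩ X^G) = φ(U) ∩ L. (That is, the fixed point locus X^G is a disjoint union of closed, embedded submanifolds of X.) -/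
open scoped Manifold

local notation "∞" => (⊤ : ℕ∞)

open Set in

private lemma aux_chart {m : ℕ} {M : Type*} [TopologicalSpace M]
    [ChartedSpace (EuclideanSpace ℝ (Fin m)) M]
    [IsManifold (𝓡 m) (⊤ : ℕ∞) M]
    {G : Type*} [Group G] [Finite G]
    (r : G → M → M)
    (hsm : ∀ γ : G, ContMDiff (𝓡 m) (𝓡 m) (⊤ : ℕ∞) (r γ))
    (hmul : ∀ (γ δ : G) (x : M), r (γ * δ) x = r γ (r δ x))
    (hone : ∀ x : M, r 1 x = x)
    (x : M) (hx : ∀ γ : G, r γ x = x) :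
    ∃ (U : Set M) (φ : M → EuclideanSpace ℝ (Fin m))
      (ψ : EuclideanSpace ℝ (Fin m) → M)
      (L : Submodule ℝ (EuclideanSpace ℝ (Fin m))),
      IsOpen U ∧ x ∈ U ∧
      ContMDiffOn (𝓡 m) 𝓘(ℝ, EuclideanSpace ℝ (Fin m)) (⊤ : ℕ∞) φ U ∧
      IsOpen (φ '' U) ∧
      ContMDiffOn 𝓘(ℝ, EuclideanSpace ℝ (Fin m)) (𝓡 m) (⊤ : ℕ∞) ψ (φ '' U) ∧
      (∀ y ∈ U, ψ (φ y) = y) ∧ (∀ z ∈ φ '' U, φ (ψ z) = z) ∧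
      φ '' (U ∩ {x : M | ∀ γ : G, r γ x = x}) = (φ '' U) ∩ (L : Set _) := by
  classical
  haveI : Fintype G := Fintype.ofFinite G
  set E := EuclideanSpace ℝ (Fin m) with hE
  set e := extChartAt (𝓡 m) x with he
  have hxe : x ∈ e.source := mem_extChartAt_source x
  have heo : IsOpen e.source := isOpen_extChartAt_source x
  have heto : IsOpen e.target := isOpen_extChartAt_target x
  set x₀ := e x with hx₀def
  have hx₀t : x₀ ∈ e.target := e.map_source hxe
  set f : G → E → E := fun γ : G => ⇑e ∘ r γ ∘ ⇑e.symm with hf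
  have hfx₀ : ∀ γ : G, f γ x₀ = x₀ := by
    intro γ
    simp only [hf, Function.comp_apply, hx₀def]
    rw [e.left_inv hxe, hx γ]
  have hfC : ∀ γ : G, ContDiffAt ℝ ((⊤ : ℕ∞) : WithTop ℕ∞) (f γ) x₀ := by
    intro γ
    have h := (contMDiffAt_iff.1 ((hsm γ) x)).2
    rw [hx γ, ModelWithCorners.range_eq_univ, contDiffWithinAt_univ] at h
    exact h
  have h1top : (1 : WithTop ℕ∞) ≤ ((⊤ : ℕ∞) : WithTop ℕ∞) := by exact_mod_cast le_top
  set A : G → (E →L[ℝ] E) := fun γ => fderiv ℝ (f γ) x₀ with hA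
  have hAd : ∀ γ : G, HasFDerivAt (f γ) (A γ) x₀ := fun γ =>
    ((hfC γ).differentiableAt (zero_lt_one.trans_le h1top).ne').hasFDerivAt
  have hnbhd : ∀ δ : G, ∀ᶠ z in nhds x₀, r δ (e.symm z) ∈ e.source := by
    intro δ
    have hopen : IsOpen (e.target ∩ ⇑e.symm ⁻¹' (r δ ⁻¹' e.source)) :=
      (continuousOn_extChartAt_symm x).isOpen_inter_preimage heto
        (heo.preimage (hsm δ).continuous)
    have hmem : x₀ ∈ e.target ∩ ⇑e.symm ⁻¹' (r δ ⁻¹' e.source) := by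
      refine ⟨hx₀t, ?_⟩
      rw [mem_preimage, mem_preimage, hx₀def, e.left_inv hxe, hx δ]
      exact hxe
    filter_upwards [hopen.mem_nhds hmem] with z hz using hz.2
  have hcomp : ∀ γ δ : G, f (γ * δ) =ᶠ[nhds x₀] (f γ) ∘ (f δ) := by
    intro γ δ
    filter_upwards [hnbhd δ] with z hz
    simp only [hf, Function.comp_apply]
    rw [hmul, e.left_inv hz]
  have hAmul : ∀ γ δ : G, A (γ * δ) = (A γ).comp (A δ) := by
    intro γ δ
    have h1 : HasFDerivAt ((f γ) ∘ (f δ)) ((A γ).comp (A δ)) x₀ := by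
      have h2 := hAd γ
      rw [← hfx₀ δ] at h2
      exact h2.comp x₀ (hAd δ)
    exact (hAd (γ * δ)).unique (h1.congr_of_eventuallyEq (hcomp γ δ))
  have hAone : A 1 = ContinuousLinearMap.id ℝ E := by
    have h0 : f 1 =ᶠ[nhds x₀] id := by
      filter_upwards [heto.mem_nhds hx₀t] with z hz
      simp only [hf, Function.comp_apply, hone, id]
      exact e.right_inv hz
    exact (hAd 1).unique ((hasFDerivAt_id x₀).congr_of_eventuallyEq h0)
  have hAinv : ∀ γ : G, (A γ⁻¹).comp (A γ) = ContinuousLinearMap.id ℝ E := by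
    intro γ
    rw [← hAmul, inv_mul_cancel, hAone]
  have hn0 : ((Fintype.card G : ℝ)) ≠ 0 := Nat.cast_ne_zero.2 Fintype.card_ne_zero
  set Φ : M → E := fun y => (Fintype.card G : ℝ)⁻¹ • ∑ γ : G, A γ⁻¹ (e (r γ y)) with hΦ
  set g : E → E := fun z => (Fintype.card G : ℝ)⁻¹ • ∑ γ : G, A γ⁻¹ (f γ z) with hg
  have hΦe : ∀ y ∈ e.source, Φ y = g (e y) := by
    intro y hy
    simp only [hΦ, hg, hf, Function.comp_apply, e.left_inv hy]
  have hequiv : ∀ (δ : G) (y : M), Φ (r δ y) = A δ (Φ y) := by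
    intro δ y
    have hterm : ∀ γ : G, A γ⁻¹ (e (r (γ * δ) y)) = A δ (A (γ * δ)⁻¹ (e (r (γ * δ) y))) := by
      intro γ
      conv_lhs => rw [show (γ⁻¹ : G) = δ * (γ * δ)⁻¹ by group]
      rw [hAmul]
      rfl
    calc Φ (r δ y) = (Fintype.card G : ℝ)⁻¹ • ∑ γ : G, A γ⁻¹ (e (r (γ * δ) y)) := by
            simp only [hΦ, ← hmul]
      _ = (Fintype.card G : ℝ)⁻¹ • ∑ σ : G, A δ (A σ⁻¹ (e (r σ y))) := by
            rw [Fintype.sum_equiv (Equiv.mulRight δ)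
              (fun γ : G => A γ⁻¹ (e (r (γ * δ) y)))
              (fun σ : G => A δ (A σ⁻¹ (e (r σ y))))
              (fun γ => by simpa using hterm γ)]
      _ = A δ (Φ y) := by rw [hΦ, map_smul, map_sum]
  set L : Submodule ℝ E :=
    { carrier := {v : E | ∀ γ : G, A γ v = v}
      add_mem' := fun hu hv γ => by rw [map_add, hu γ, hv γ]
      zero_mem' := fun γ => map_zero _
      smul_mem' := fun c v hv γ => by rw [map_smul, hv γ] } with hL
  have hgd : HasFDerivAt g (ContinuousLinearMap.id ℝ E) x₀ := by
    have h1 : ∀ γ : G, HasFDerivAt (fun z => A γ⁻¹ (f γ z)) (ContinuousLinearMap.id ℝ E) x₀ := by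
      intro γ
      have h2 := (A γ⁻¹).hasFDerivAt.comp x₀ (hAd γ)
      rwa [hAinv γ] at h2
    have h2 := (HasFDerivAt.fun_sum (fun γ (_ : γ ∈ Finset.univ) => h1 γ)).const_smul
      ((Fintype.card G : ℝ)⁻¹)
    rw [Finset.sum_const, Finset.card_univ] at h2
    have h3 : (Fintype.card G : ℝ)⁻¹ • (Fintype.card G • ContinuousLinearMap.id ℝ E)
        = ContinuousLinearMap.id ℝ E := by
      rw [← Nat.cast_smul_eq_nsmul ℝ, smul_smul, inv_mul_cancel₀ hn0, one_smul]
    rwa [h3] at h2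
  set W := ⋂ γ : G, r γ ⁻¹' e.source with hW
  have hWo : IsOpen W := isOpen_iInter_of_finite fun γ => heo.preimage (hsm γ).continuous
  have hxW : x ∈ W := mem_iInter.2 fun γ => by
    rw [mem_preimage, hx γ]; exact hxe
  have hWsrc : ∀ y ∈ W, ∀ γ : G, r γ y ∈ e.source := fun y hy γ => mem_iInter.1 hy γ
  have hesm : ContMDiffOn (𝓡 m) 𝓘(ℝ, E) (⊤ : ℕ∞) e e.source := by
    rw [he, extChartAt_source]
    exact contMDiffOn_extChartAt
  have hΦsm : ContMDiffOn (𝓡 m) 𝓘(ℝ, E) (⊤ : ℕ∞) Φ W := by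
    have hsum : ContMDiffOn (𝓡 m) 𝓘(ℝ, E) (⊤ : ℕ∞) (fun y => ∑ γ : G, A γ⁻¹ (e (r γ y))) W := by
      apply contMDiffOn_finset_sum
      intro γ _
      have h3 : ContMDiffOn (𝓡 m) 𝓘(ℝ, E) (⊤ : ℕ∞) (⇑e ∘ r γ) W :=
        hesm.comp ((hsm γ).contMDiffOn) (fun y hy => hWsrc y hy γ)
      exact ((A γ⁻¹).contDiff.contMDiff).comp_contMDiffOn h3
    have h4 := (((Fintype.card G : ℝ)⁻¹ • ContinuousLinearMap.id ℝ E).contDiff.contMDiff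
      ).comp_contMDiffOn hsum
    exact h4
  set Z := e.target ∩ ⇑e.symm ⁻¹' W with hZ
  have hZo : IsOpen Z := (continuousOn_extChartAt_symm x).isOpen_inter_preimage heto hWo
  have hx₀Z : x₀ ∈ Z := ⟨hx₀t, by rw [mem_preimage, hx₀def, e.left_inv hxe]; exact hxW⟩
  have hgsm : ContDiffOn ℝ ((⊤ : ℕ∞) : WithTop ℕ∞) g Z := by
    have h1 : ContMDiffOn 𝓘(ℝ, E) (𝓡 m) (⊤ : ℕ∞) (⇑e.symm) Z := by
      have := contMDiffOn_extChartAt_symm (I := 𝓡 m) (n := (⊤ : ℕ∞)) x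
      exact (this.mono inter_subset_left : ContMDiffOn 𝓘(ℝ, E) (𝓡 m) (⊤ : ℕ∞) (⇑e.symm) Z)
    have h2 : ContMDiffOn 𝓘(ℝ, E) 𝓘(ℝ, E) (⊤ : ℕ∞) (Φ ∘ ⇑e.symm) Z :=
      hΦsm.comp h1 (fun z hz => hz.2)
    exact (h2 : ContMDiffOn 𝓘(ℝ, E) 𝓘(ℝ, E) (⊤ : ℕ∞) g Z).contDiffOn
  have hgC : ∀ z ∈ Z, ContDiffAt ℝ ((⊤ : ℕ∞) : WithTop ℕ∞) g z := fun z hz =>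
    (hgsm z hz).contDiffAt (hZo.mem_nhds hz)
  have hident : HasFDerivAt g ((ContinuousLinearEquiv.refl ℝ E : E →L[ℝ] E)) x₀ := by
    simpa using hgd
  set G₀ := (hgC x₀ hx₀Z).toOpenPartialHomeomorph g hident (zero_lt_one.trans_le h1top).ne' with hG₀
  have hG₀coe : ⇑G₀ = g := rfl
  have hx₀G : x₀ ∈ G₀.source :=
    ContDiffAt.mem_toOpenPartialHomeomorph_source (hgC x₀ hx₀Z) hident (zero_lt_one.trans_le h1top).ne'
  have hfd : ContinuousOn (fderiv ℝ g) Z :=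
    hgsm.continuousOn_fderiv_of_isOpen hZo h1top
  have hUopen : IsOpen {T : E →L[ℝ] E | IsUnit T} := Units.isOpen
  set V := Z ∩ fderiv ℝ g ⁻¹' {T : E →L[ℝ] E | IsUnit T} with hV
  have hVo : IsOpen V := hfd.isOpen_inter_preimage hZo hUopen
  have hx₀V : x₀ ∈ V := by
    refine ⟨hx₀Z, ?_⟩
    rw [mem_preimage, hgd.fderiv]
    exact ⟨1, rfl⟩
  have hsymmC : ∀ b ∈ G₀ '' (G₀.source ∩ V), ContDiffAt ℝ ((⊤ : ℕ∞) : WithTop ℕ∞) G₀.symm b := by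
    rintro b ⟨a, ⟨haG, haZ, haU⟩, rfl⟩
    obtain ⟨u, hu⟩ := (mem_preimage.1 haU)
    have hsa : G₀.symm (G₀ a) = a := G₀.left_inv haG
    apply G₀.contDiffAt_symm (f₀' := ContinuousLinearEquiv.unitsEquiv ℝ E u) (G₀.map_source haG)
    · rw [hsa, hG₀coe]
      have hda : HasFDerivAt g (fderiv ℝ g a) a :=
        ((hgC a haZ).differentiableAt (zero_lt_one.trans_le h1top).ne').hasFDerivAt
      rw [← hu] at hda
      exact hda
    · rw [hsa, hG₀coe]
      exact hgC a haZ
  set Ω := e.source ∩ ⇑e ⁻¹' (G₀.source ∩ V) with hΩ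
  have hΩo : IsOpen Ω := (continuousOn_extChartAt x).isOpen_inter_preimage heo
    (G₀.open_source.inter hVo)
  have hxΩ : x ∈ Ω := ⟨hxe, hx₀G, hx₀V⟩
  have hΩe : Ω ⊆ e.source := inter_subset_left
  set U := ⋂ γ : G, r γ ⁻¹' Ω with hU
  have hUo : IsOpen U := isOpen_iInter_of_finite fun γ => hΩo.preimage (hsm γ).continuous
  have hxU : x ∈ U := mem_iInter.2 fun γ => by rw [mem_preimage, hx γ]; exact hxΩ
  have hUΩ' : ∀ y ∈ U, ∀ γ : G, r γ y ∈ Ω := fun y hy γ => mem_iInter.1 hy γ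
  have hUΩ : U ⊆ Ω := fun y hy => by
    have h := hUΩ' y hy 1
    rwa [hone y] at h
  have hUW : U ⊆ W := fun y hy => mem_iInter.2 fun γ => hΩe (hUΩ' y hy γ)
  have hUe : U ⊆ e.source := fun y hy => hΩe (hUΩ hy)
  have hΦG : ∀ y ∈ Ω, Φ y = G₀ (e y) := fun y hy => hΦe y (hΩe hy)
  have hinj : ∀ y ∈ Ω, ∀ y' ∈ Ω, Φ y = Φ y' → y = y' := by
    intro y hy y' hy' h
    have h2 : e y = e y' := by
      apply G₀.injOn hy.2.1 hy'.2.1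
      rw [hG₀coe, ← hΦe y (hΩe hy), ← hΦe y' (hΩe hy')]
      exact h
    exact e.injOn (hΩe hy) (hΩe hy') h2
  have heU : ⇑e '' U ⊆ G₀.source ∩ V := by
    rintro _ ⟨y, hy, rfl⟩
    exact (hUΩ hy).2
  have heUo : IsOpen (⇑e '' U) := by
    rw [e.image_eq_target_inter_inv_preimage hUe]
    exact (continuousOn_extChartAt_symm x).isOpen_inter_preimage heto hUo
  have hΦU : Φ '' U = ⇑G₀ '' (⇑e '' U) := by
    rw [image_image]
    exact image_congr fun y hy => hΦG y (hUΩ hy)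
  have hφUo : IsOpen (Φ '' U) := by
    rw [hΦU]
    exact G₀.isOpen_image_of_subset_source heUo (heU.trans inter_subset_left)
  have hφUsub : Φ '' U ⊆ ⇑G₀ '' (G₀.source ∩ V) := by
    rw [hΦU]
    exact image_mono heU
  set ψ : E → M := ⇑e.symm ∘ ⇑G₀.symm with hψ
  have hψe : ∀ y ∈ U, ψ (Φ y) = y := by
    intro y hy
    have h1 : Φ y = G₀ (e y) := hΦG y (hUΩ hy)
    rw [h1]
    show e.symm (G₀.symm (G₀ (e y))) = y
    rw [G₀.left_inv (hUΩ hy).2.1, e.left_inv (hUe hy)]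
  have hψsm : ContMDiffOn 𝓘(ℝ, E) (𝓡 m) (⊤ : ℕ∞) ψ (Φ '' U) := by
    have h1 : ContDiffOn ℝ ((⊤ : ℕ∞) : WithTop ℕ∞) (⇑G₀.symm) (Φ '' U) := fun b hb =>
      (hsymmC b (hφUsub hb)).contDiffWithinAt
    have h2 : ContMDiffOn 𝓘(ℝ, E) 𝓘(ℝ, E) (⊤ : ℕ∞) (⇑G₀.symm) (Φ '' U) := h1.contMDiffOn
    have h3 : ContMDiffOn 𝓘(ℝ, E) (𝓡 m) (⊤ : ℕ∞) (⇑e.symm) e.target :=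
      contMDiffOn_extChartAt_symm (I := 𝓡 m) (n := (⊤ : ℕ∞)) x
    apply h3.comp h2
    rintro _ ⟨y, hy, rfl⟩
    rw [mem_preimage, hΦG y (hUΩ hy), G₀.left_inv (hUΩ hy).2.1]
    exact e.map_source (hUe hy)
  have hright : ∀ z ∈ Φ '' U, Φ (ψ z) = z := by
    rintro _ ⟨y, hy, rfl⟩
    rw [hψe y hy]
  have himg : Φ '' (U ∩ {x : M | ∀ γ : G, r γ x = x}) = (Φ '' U) ∩ (L : Set E) := by
    apply Subset.antisymm
    · rintro _ ⟨y, ⟨hyU, hyF⟩, rfl⟩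
      refine ⟨mem_image_of_mem _ hyU, fun γ => ?_⟩
      rw [← hequiv γ y, hyF γ]
    · rintro z ⟨hz1, hz2⟩
      obtain ⟨y, hyU, rfl⟩ := hz1
      refine ⟨y, ⟨hyU, fun γ => ?_⟩, rfl⟩
      apply hinj (r γ y) (hUΩ' y hyU γ) y (hUΩ hyU)
      rw [hequiv γ y]
      exact hz2 γ
  exact ⟨U, Φ, ψ, L, hUo, hxU, hΦsm.mono hUW, hφUo, hψsm, hψe, hright, himg⟩

/-- Let `M` be a manifold of dimension `m` (smooth, Hausdorff and second countable, without
boundary), `G` a finite group, and `r : G → Diff(M)` an action of `G` on `M` by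
diffeomorphisms: each `r γ` is smooth (whence, by the group laws, a diffeomorphism with smooth
inverse `r γ⁻¹`), `r (γ * δ) = r γ ∘ r δ` and `r 1 = id`.  Then the fixed point locus
`M^G = {x | ∀ γ, r γ x = x}` is closed in `M`, and near every fixed point there is a smooth
chart (a smooth map `φ` on an open set `U`, a homeomorphism onto an open subset of `ℝ^m` with
smooth inverse `ψ`) taking `M^G` to a linear subspace `L ⊆ ℝ^m`; that is, `M^G` is a disjoint
union of closed, embedded submanifolds of `M`. -/
theorem fixed_point_locus_submanifold {m : ℕ} {M : Type*} [TopologicalSpace M]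
    [ChartedSpace (EuclideanSpace ℝ (Fin m)) M]
    [IsManifold (𝓡 m) (⊤ : ℕ∞) M] [T2Space M] [SecondCountableTopology M]
    {G : Type*} [Group G] [Finite G]
    (r : G → M → M)
    (hsm : ∀ γ : G, ContMDiff (𝓡 m) (𝓡 m) (⊤ : ℕ∞) (r γ))
    (hmul : ∀ (γ δ : G) (x : M), r (γ * δ) x = r γ (r δ x))
    (hone : ∀ x : M, r 1 x = x) :
    IsClosed {x : M | ∀ γ : G, r γ x = x} ∧
    ∀ x ∈ {x : M | ∀ γ : G, r γ x = x},
      ∃ (U : Set M) (φ : M → EuclideanSpace ℝ (Fin m))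
        (ψ : EuclideanSpace ℝ (Fin m) → M)
        (L : Submodule ℝ (EuclideanSpace ℝ (Fin m))),
        IsOpen U ∧ x ∈ U ∧
        ContMDiffOn (𝓡 m) 𝓘(ℝ, EuclideanSpace ℝ (Fin m)) (⊤ : ℕ∞) φ U ∧
        IsOpen (φ '' U) ∧
        ContMDiffOn 𝓘(ℝ, EuclideanSpace ℝ (Fin m)) (𝓡 m) (⊤ : ℕ∞) ψ (φ '' U) ∧
        (∀ y ∈ U, ψ (φ y) = y) ∧ (∀ z ∈ φ '' U, φ (ψ z) = z) ∧
        φ '' (U ∩ {x : M | ∀ γ : G, r γ x = x}) = (φ '' U) ∩ (L : Set _) := by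
  constructor
  · have hset : {x : M | ∀ γ : G, r γ x = x} = ⋂ γ : G, {x : M | r γ x = x} := by
      ext y; simp [Set.mem_iInter]
    rw [hset]
    exact isClosed_iInter fun γ => isClosed_eq ((hsm γ).continuous) continuous_id
  · intro x hx
    exact aux_chart r hsm hmul hone x hx
end

section
/- Let Q = [0,∞)² = {(x₁, x₂) ∈ ℝ² : x₁ ≥ 0, x₂ ≥ 0}, and let A = {F|_Q : F ∈ C∞(ℝ²)} be the commutative ℝ-algebra of restrictions to Q of smooth functions on ℝ², with pointwise operations. Let J ⊆ A be the ideal generated by the function (x₁, x₂) ↦ x₁ + x₂. Then the common zero set of the elements of J in Q is the single point {(0, 0)}, but the quotient ℝ-algebra A/J is infinite-dimensional as a real vector space. -/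
set_option synthInstance.maxHeartbeats 1000000

section AuxLemmas

open Set Polynomial

private lemma myIterWithin {f : ℝ → ℝ} (hf : ContDiff ℝ (⊤:ℕ∞) f) (n : ℕ) {x : ℝ}
    (hx : x ∈ Set.Ici (0:ℝ)) :
    iteratedDerivWithin n f (Set.Ici 0) x = iteratedDeriv n f x := by
  have h := (contDiff_iff_ftaylorSeries.mp hf).hasFTaylorSeriesUpToOn (Set.Ici (0:ℝ))
  have h2 := h.eq_iteratedFDerivWithin_of_uniqueDiffOn (m := n) (by exact_mod_cast le_top)
    (uniqueDiffOn_Ici 0) hx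
  rw [iteratedDerivWithin, iteratedDeriv, ← h2]
  rfl

private lemma myEqDeriv {f g : ℝ → ℝ} (hf : ContDiff ℝ (⊤:ℕ∞) f) (hg : ContDiff ℝ (⊤:ℕ∞) g)
    (h : ∀ x : ℝ, 0 ≤ x → f x = g x) (n : ℕ) : iteratedDeriv n f 0 = iteratedDeriv n g 0 := by
  have h0 : (0:ℝ) ∈ Set.Ici (0:ℝ) := Set.self_mem_Ici
  rw [← myIterWithin hf n h0, ← myIterWithin hg n h0]
  exact iteratedDerivWithin_congr (fun x hx => h x hx) h0

private lemma myMulId {h : ℝ → ℝ} (hh : ContDiff ℝ (⊤:ℕ∞) h) (n : ℕ) (x : ℝ) :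
    iteratedDeriv (n+1) (fun y => y * h y) x
      = (n+1 : ℝ) * iteratedDeriv n h x + x * iteratedDeriv (n+1) h x := by
  have hdiff : ∀ k : ℕ, Differentiable ℝ (iteratedDeriv k h) := fun k =>
    hh.differentiable_iteratedDeriv k (WithTop.coe_lt_coe.mpr (WithTop.coe_lt_top k))
  have hd0 : Differentiable ℝ h := by simpa using hdiff 0
  induction n generalizing x with
  | zero =>
    rw [iteratedDeriv_succ, iteratedDeriv_zero]
    rw [deriv_fun_mul differentiableAt_fun_id hd0.differentiableAt, deriv_id'']
    simp [iteratedDeriv_succ, iteratedDeriv_zero]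
  | succ n ih =>
    rw [iteratedDeriv_succ (n := n+1), funext ih]
    rw [deriv_fun_add ((hdiff n).differentiableAt.const_mul _)
        (differentiableAt_fun_id.fun_mul (hdiff (n+1)).differentiableAt),
      deriv_const_mul _ (hdiff n).differentiableAt,
      deriv_fun_mul differentiableAt_fun_id (hdiff (n+1)).differentiableAt, deriv_id'']
    rw [← iteratedDeriv_succ, ← iteratedDeriv_succ]
    push_cast
    ring

private lemma myPolyDeriv (P : Polynomial ℝ) (n : ℕ) (x : ℝ) :
    iteratedDeriv n (fun y => P.eval y) x = (Polynomial.derivative^[n] P).eval x := by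
  induction n generalizing P x with
  | zero => simp
  | succ n ih =>
    rw [iteratedDeriv_succ', Function.iterate_succ_apply]
    have hder : deriv (fun y => P.eval y) = fun y => (Polynomial.derivative P).eval y :=
      funext fun y => Polynomial.deriv P
    rw [hder]
    exact ih _ _

private lemma myPolyDeriv0 (P : Polynomial ℝ) (n : ℕ) :
    iteratedDeriv n (fun y => P.eval y) 0 = (n.factorial : ℝ) * P.coeff n := by
  rw [myPolyDeriv, ← Polynomial.coeff_zero_eq_eval_zero, Polynomial.coeff_iterate_derivative]
  simp [Nat.descFactorial_self, nsmul_eq_mul]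

private lemma myChain {G : ℝ×ℝ → ℝ} (hG : ContDiff ℝ (⊤:ℕ∞) G) (lam : ℝ) (k : ℕ) :
    iteratedDeriv k (fun x : ℝ => G (x, lam * x)) 0
      = iteratedFDeriv ℝ k G 0 (fun _ : Fin k => ((1:ℝ), lam)) := by
  set L : ℝ →L[ℝ] ℝ × ℝ := (ContinuousLinearMap.id ℝ ℝ).prod (lam • ContinuousLinearMap.id ℝ ℝ)
    with hL
  have h1 : (fun x : ℝ => G (x, lam * x)) = G ∘ L := by
    funext x
    simp [hL, Function.comp, ContinuousLinearMap.prod_apply, smul_eq_mul]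
  rw [iteratedDeriv_eq_iteratedFDeriv, h1,
    L.iteratedFDeriv_comp_right hG 0 (by exact_mod_cast le_top)]
  have hL0 : L 0 = 0 := by simp
  rw [hL0]
  have : (fun i : Fin k => L 1) = fun _ : Fin k => ((1:ℝ), lam) := by
    funext i; simp [hL, Prod.ext_iff]
  simp [ContinuousMultilinearMap.compContinuousLinearMap_apply]
  rw [show (fun i : Fin k => L 1) = fun _ : Fin k => ((1:ℝ), lam) from this]

private lemma myPolyOfMultilinear (k : ℕ)
    (M : ContinuousMultilinearMap ℝ (fun _ : Fin k => ℝ × ℝ) ℝ) :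
    ∃ q : Polynomial ℝ, ∀ lam : ℝ, M (fun _ => ((1:ℝ), lam)) = q.eval lam := by
  classical
  refine ⟨∑ s : Finset (Fin k),
      Polynomial.C (M (s.piecewise (fun _ => ((0:ℝ),(1:ℝ))) (fun _ => ((1:ℝ),(0:ℝ))))) *
        Polynomial.X ^ s.card, fun lam => ?_⟩
  have h1 : (fun _ : Fin k => ((1:ℝ), lam))
      = (fun _ : Fin k => lam • ((0:ℝ),(1:ℝ))) + (fun _ => ((1:ℝ),(0:ℝ))) := by
    funext i; simp [Prod.ext_iff]
  rw [h1, M.map_add_univ _ _]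
  rw [Polynomial.eval_finset_sum]
  refine Finset.sum_congr rfl fun s _ => ?_
  have h2 : s.piecewise (fun _ : Fin k => lam • ((0:ℝ),(1:ℝ))) (fun _ => ((1:ℝ),(0:ℝ)))
      = s.piecewise (fun i => lam • (s.piecewise (fun _ : Fin k => ((0:ℝ),(1:ℝ)))
          (fun _ => ((1:ℝ),(0:ℝ))) i)) (s.piecewise (fun _ : Fin k => ((0:ℝ),(1:ℝ)))
          (fun _ => ((1:ℝ),(0:ℝ)))) := by
    funext i
    by_cases hi : i ∈ s
    · simp [Finset.piecewise_eq_of_mem _ _ _ hi]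
    · simp [Finset.piecewise_eq_of_notMem _ _ _ hi]
  rw [h2]
  rw [ContinuousMultilinearMap.map_piecewise_smul, Finset.prod_const]
  rw [Polynomial.eval_mul, Polynomial.eval_C, Polynomial.eval_pow, Polynomial.eval_X]
  rw [smul_eq_mul, mul_comm]

private lemma myPolyContDiff (P : Polynomial ℝ) : ContDiff ℝ (⊤:ℕ∞) fun x : ℝ => P.eval x := by
  induction P using Polynomial.induction_on' with
  | add p q hp hq => simpa [Polynomial.eval_add] using hp.add hq
  | monomial n a => simpa [Polynomial.eval_monomial] using contDiff_const.mul (contDiff_id.pow n)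

private lemma myConstMul {f : ℝ → ℝ} (hf : ContDiff ℝ (⊤:ℕ∞) f) (c : ℝ) (n : ℕ) (x : ℝ) :
    iteratedDeriv n (fun y => c * f y) x = c * iteratedDeriv n f x := by
  induction n generalizing x with
  | zero => simp
  | succ n ih =>
    rw [iteratedDeriv_succ, iteratedDeriv_succ, funext ih, deriv_const_mul _
      ((hf.differentiable_iteratedDeriv n
        (WithTop.coe_lt_coe.mpr (WithTop.coe_lt_top n))).differentiableAt)]

private lemma myKey {P : Polynomial ℝ} {G : ℝ×ℝ → ℝ} (hG : ContDiff ℝ (⊤:ℕ∞) G)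
    (h : ∀ x y : ℝ, 0 ≤ x → 0 ≤ y → P.eval x = (x + y) * G (x, y)) : P = 0 := by
  refine Polynomial.ext fun n => ?_
  rw [Polynomial.coeff_zero]
  match n with
  | 0 =>
    rw [Polynomial.coeff_zero_eq_eval_zero, h 0 0 le_rfl le_rfl]
    ring
  | m+1 =>
    obtain ⟨q, hq⟩ := myPolyOfMultilinear m (iteratedFDeriv ℝ m G 0)
    have hfact : ∀ lam : ℝ, 0 ≤ lam →
        (((m+1).factorial : ℝ)) * P.coeff (m+1) = (1+lam) * ((m+1 : ℝ) * q.eval lam) := by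
      intro lam hlam
      have hh : ContDiff ℝ (⊤:ℕ∞) (fun x : ℝ => G (x, lam*x)) :=
        hG.comp (contDiff_id.prodMk (contDiff_const.mul contDiff_id))
      have hF2 : ContDiff ℝ (⊤:ℕ∞) (fun x : ℝ => (1+lam) * (x * G (x, lam*x))) :=
        contDiff_const.mul (contDiff_id.mul hh)
      have heq : ∀ x : ℝ, 0 ≤ x → P.eval x = (1+lam) * (x * G (x, lam*x)) := fun x hx => by
        rw [h x (lam*x) hx (mul_nonneg hlam hx)]; ring
      have hED := myEqDeriv (myPolyContDiff P) hF2 heq (m+1)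
      have e1 : iteratedDeriv (m+1) (fun x : ℝ => (1+lam) * (x * G (x, lam*x))) 0
          = (1+lam) * iteratedDeriv (m+1) (fun x : ℝ => x * G (x, lam*x)) 0 :=
        myConstMul (f := fun x : ℝ => x * G (x, lam*x)) (by exact contDiff_id.mul hh)
          (1+lam) (m+1) 0
      rw [myPolyDeriv0] at hED
      rw [hED, e1, myMulId hh m 0, myChain hG lam m, hq lam]
      ring
    set c := (((m+1).factorial : ℝ)) * P.coeff (m+1) with hc
    have hpoly : Polynomial.C c - (1 + Polynomial.X) * (Polynomial.C ((m:ℝ)+1) * q) = 0 := by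
      apply Polynomial.eq_zero_of_infinite_isRoot
      refine (Set.Ici_infinite (0:ℝ)).mono fun lam hlam => ?_
      have hfl := hfact lam hlam
      simp only [Set.mem_setOf_eq, Polynomial.IsRoot.def, Polynomial.eval_sub,
        Polynomial.eval_mul, Polynomial.eval_add, Polynomial.eval_one, Polynomial.eval_C,
        Polynomial.eval_X]
      linarith [hfl]
    have h2 := congrArg (Polynomial.eval (-1)) hpoly
    simp only [Polynomial.eval_sub, Polynomial.eval_mul, Polynomial.eval_add, Polynomial.eval_one,
      Polynomial.eval_C, Polynomial.eval_X, Polynomial.eval_zero] at h2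
    have hc0 : c = 0 := by linarith [h2]
    have hne : (((m+1).factorial : ℝ)) ≠ 0 := Nat.cast_ne_zero.mpr (Nat.factorial_ne_zero _)
    rw [hc] at hc0
    rcases mul_eq_zero.mp hc0 with h'|h'
    · exact absurd h' hne
    · exact h'

end AuxLemmas

/-- The quadrant `Q = [0,∞)² ⊆ ℝ²`. -/
def Quadrant : Type := {p : ℝ × ℝ // 0 ≤ p.1 ∧ 0 ≤ p.2}

/-- The commutative `ℝ`-algebra `A` of restrictions to `Q = [0,∞)²` of smooth functions on
`ℝ²`, with pointwise operations. -/
noncomputable def quadrantSmooth : Subalgebra ℝ (Quadrant → ℝ) where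
  carrier := {f | ∃ F : ℝ × ℝ → ℝ, ContDiff ℝ (⊤ : ℕ∞) F ∧ ∀ q : Quadrant, f q = F q.1}
  mul_mem' := by
    rintro f g ⟨F, hF, hf⟩ ⟨G, hG, hg⟩
    exact ⟨F * G, hF.mul hG, fun q => by simp [hf q, hg q]⟩
  add_mem' := by
    rintro f g ⟨F, hF, hf⟩ ⟨G, hG, hg⟩
    exact ⟨F + G, hF.add hG, fun q => by simp [hf q, hg q]⟩
  algebraMap_mem' r := ⟨fun _ => r, contDiff_const, fun _ => rfl⟩

/-- The element `(x₁, x₂) ↦ x₁ + x₂` of the algebra of restrictions to `[0,∞)²` of smooth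
functions on `ℝ²`. -/
noncomputable def quadrantGen : quadrantSmooth :=
  ⟨fun q => q.1.1 + q.1.2,
    ⟨fun p => p.1 + p.2, contDiff_fst.add contDiff_snd, fun _ => rfl⟩⟩

set_option maxHeartbeats 2000000 in
/-- Let `A` be the commutative `ℝ`-algebra of restrictions to `Q = [0,∞)²` of smooth functions
on `ℝ²`, and `J ⊆ A` the ideal generated by `(x₁, x₂) ↦ x₁ + x₂`.  Then the common zero set of
the elements of `J` in `Q` is the single point `{(0,0)}`, but the quotient `A/J` is
infinite-dimensional as a real vector space. -/
theorem quadrant_quotient_infinite_dimensional :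
    {q : Quadrant | ∀ f ∈ Ideal.span {quadrantGen}, (f : Quadrant → ℝ) q = 0}
        = {q : Quadrant | q.1 = ((0 : ℝ), (0 : ℝ))} ∧
    ¬ FiniteDimensional ℝ (↥quadrantSmooth ⧸ Ideal.span {quadrantGen}) := by
  constructor
  · ext q
    simp only [Set.mem_setOf_eq]
    constructor
    · intro hq
      have h1 : (quadrantGen : Quadrant → ℝ) q = 0 :=
        hq quadrantGen (Ideal.subset_span (Set.mem_singleton _))
      have h2 : q.1.1 + q.1.2 = 0 := h1
      have h3 := q.2
      have hx : q.1.1 = 0 := le_antisymm (by linarith [h3.2]) h3.1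
      have hy : q.1.2 = 0 := le_antisymm (by linarith [h3.1]) h3.2
      exact Prod.ext hx hy
    · intro hq f hf
      obtain ⟨c, hc⟩ := Ideal.mem_span_singleton'.mp hf
      rw [← hc]
      have hcoe : ((c * quadrantGen : quadrantSmooth) : Quadrant → ℝ) q
          = (c : Quadrant → ℝ) q * (quadrantGen : Quadrant → ℝ) q := rfl
      rw [hcoe]
      have hgen : (quadrantGen : Quadrant → ℝ) q = q.1.1 + q.1.2 := rfl
      rw [hgen, hq]
      norm_num
  · intro hfd
    set J := Ideal.span {quadrantGen} with hJ
    have hxmem : ∀ n : ℕ, (fun q : Quadrant => q.1.1 ^ n) ∈ quadrantSmooth := fun n =>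
      ⟨fun p => p.1 ^ n, contDiff_fst.pow n, fun _ => rfl⟩
    set xp : ℕ → quadrantSmooth := fun n => ⟨_, hxmem n⟩ with hxp
    set v : ℕ → (quadrantSmooth ⧸ J) := fun n => Ideal.Quotient.mkₐ ℝ J (xp n) with hv
    have hli : LinearIndependent ℝ v := by
      rw [linearIndependent_iff']
      intro s g hsum i hi
      have hmkz : (Ideal.Quotient.mkₐ ℝ J) (∑ j ∈ s, g j • xp j) = 0 := by
        rw [map_sum]
        simp only [map_smul]
        exact hsum
      have hmem : (∑ j ∈ s, g j • xp j) ∈ J := by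
        rwa [Ideal.Quotient.mkₐ_eq_mk, Ideal.Quotient.eq_zero_iff_mem] at hmkz
      rw [hJ] at hmem
      obtain ⟨c, hc⟩ := Ideal.mem_span_singleton'.mp hmem
      obtain ⟨Gc, hGc, hGceq⟩ := c.2
      have hcoe : ((∑ j ∈ s, g j • xp j : quadrantSmooth) : Quadrant → ℝ)
          = ∑ j ∈ s, g j • ((xp j : Quadrant → ℝ)) := by
        have := map_sum quadrantSmooth.val.toLinearMap (fun j => g j • xp j) s
        simpa only [map_smul, AlgHom.toLinearMap_apply, Subalgebra.coe_val] using this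
      have heval : ∀ x y : ℝ, 0 ≤ x → 0 ≤ y →
          (∑ j ∈ s, g j * x ^ j) = (x+y) * Gc (x,y) := by
        intro x y hx hy
        have hcq := congrArg (fun f : quadrantSmooth =>
          (f : Quadrant → ℝ) ⟨(x,y), hx, hy⟩) hc
        have hL : ((c * quadrantGen : quadrantSmooth) : Quadrant → ℝ) ⟨(x,y), hx, hy⟩
            = Gc (x,y) * (x + y) := by
          have : ((c * quadrantGen : quadrantSmooth) : Quadrant → ℝ) ⟨(x,y), hx, hy⟩
              = (c : Quadrant → ℝ) ⟨(x,y), hx, hy⟩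
                * (quadrantGen : Quadrant → ℝ) ⟨(x,y), hx, hy⟩ := rfl
          rw [this, hGceq ⟨(x,y), hx, hy⟩]
          rfl
        have hR : ((∑ j ∈ s, g j • xp j : quadrantSmooth) : Quadrant → ℝ) ⟨(x,y), hx, hy⟩
            = ∑ j ∈ s, g j * x ^ j := by
          rw [hcoe]
          exact Finset.sum_apply _ _ _
        rw [hL, hR] at hcq
        rw [← hcq]
        ring
      set P : Polynomial ℝ := ∑ j ∈ s, Polynomial.C (g j) * Polynomial.X ^ j with hP
      have hPeval : ∀ x : ℝ, P.eval x = ∑ j ∈ s, g j * x ^ j := by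
        intro x
        rw [hP, Polynomial.eval_finset_sum]
        simp only [Polynomial.eval_mul, Polynomial.eval_C, Polynomial.eval_pow,
          Polynomial.eval_X]
      have hP0 : P = 0 := by
        refine myKey (hGc.of_le (by simp)) fun x y hx hy => ?_
        rw [hPeval]
        exact heval x y hx hy
      have := congrArg (fun p : Polynomial ℝ => Polynomial.coeff p i) hP0
      simp only [hP, Polynomial.finset_sum_coeff, Polynomial.coeff_C_mul,
        Polynomial.coeff_X_pow, Polynomial.coeff_zero, mul_ite, mul_one, mul_zero] at this
      rwa [Finset.sum_ite_eq s i (fun j => g j), if_pos hi] at this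
    have hrank := hli.aleph0_le_rank
    exact absurd hrank (not_le.mpr (Module.rank_lt_aleph0 ℝ _))
end
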